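/- arXiv:1410.6856 — 14 statements merged into one kernel-verified Lean document; each statement's English description precedes it below -/
import Mathlib

section
/- For every positive integer k there exists a constant N such that for every integer n > N there is a prime p with n/2 < p < n - 2k (i.e., n < 2p and p + 2k < n). -/
/-!
Erdős's proof of Bertrand's postulate shows more than the existence of one prime in `(m, 2m]`:
every such prime contributes at most a factor `2m` to `C(2m, m) > 4^m / m`, the primes in
`(2m/3, m]` do not divide it, and those up to `2m/3` contribute at most `(2m)^√(2m) · 4^(2m/3)`;
since `(2m)^(√(2m) + K) = 4^(o(m))`, the interval `(m, 2m]` contains at least `K` primes once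
`m` is large. Take `m = ⌈n/2⌉` and `K = k + 2`: all these primes are odd and exceed `n/2`, and
at most `k + 1` odd numbers lie in `[n - 2k, n + 1]`, so one of them is smaller than `n - 2k`.
-/

open Asymptotics Filter Finset

section

open Real

theorem isLittleO_sqrt_add_const_mul_log (t : ℝ) :
    (fun x => (√x + t) * log x) =o[atTop] id := by
  have hsqrt : (fun x => √x + t) =O[atTop] (fun x => √x) :=
    (isBigO_refl _ _).add (isLittleO_const_left.2 <| .inr <|
      tendsto_norm_atTop_atTop.comp tendsto_sqrt_atTop).isBigO
  have hlog : log =o[atTop] (fun x => √x) := by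
    simpa only [← sqrt_eq_rpow] using isLittleO_log_rpow_atTop one_half_pos
  refine (hsqrt.mul_isLittleO hlog).trans_eventuallyEq ?_
  filter_upwards [eventually_ge_atTop 0] with x hx using mul_self_sqrt hx

theorem eventually_log_add_sqrt_mul_log_le (t : ℝ) {c : ℝ} (hc : 0 < c) :
    ∀ᶠ x in atTop, log x + (√(2 * x) + t) * log (2 * x) ≤ c * x := by
  have h : (fun x => log x + (√(2 * x) + t) * log (2 * x)) =o[atTop] id :=
    isLittleO_log_id_atTop.add <|
      ((isLittleO_sqrt_add_const_mul_log t).comp_tendsto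
        (tendsto_id.const_mul_atTop two_pos)).trans_isBigO (isBigO_const_mul_self 2 id atTop)
  filter_upwards [h.bound hc, eventually_ge_atTop 0] with x hx hx0
  rw [id, norm_of_nonneg hx0] at hx
  exact (le_norm_self _).trans hx

theorem eventually_mul_pow_mul_four_pow_le (t : ℕ) :
    ∀ᶠ n : ℕ in atTop, n * (2 * n) ^ (Nat.sqrt (2 * n) + t) * 4 ^ (2 * n / 3) ≤ 4 ^ n := by
  have hlog4 : 0 < log 4 := log_pos (by norm_num)
  filter_upwards [tendsto_natCast_atTop_atTop.eventually
    (eventually_log_add_sqrt_mul_log_le t (div_pos hlog4 three_pos)), eventually_gt_atTop 0]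
    with n hn hn0
  have hsqrt : (Nat.sqrt (2 * n) : ℝ) ≤ √(2 * n) := by exact_mod_cast nat_sqrt_le_real_sqrt
  have hdiv : ((2 * n / 3 : ℕ) : ℝ) ≤ 2 * n / 3 := by exact_mod_cast Nat.cast_div_le
  have hlog2n : 0 ≤ log (2 * n) := log_nonneg (by norm_cast; omega)
  rw [← Nat.cast_le (α := ℝ), ← log_le_log_iff (by positivity) (by positivity)]
  push_cast
  rw [log_mul (by positivity) (by positivity), log_mul (by positivity) (by positivity), log_pow,
    log_pow, log_pow]
  push_cast
  linarith [mul_le_mul_of_nonneg_right hsqrt hlog2n, mul_le_mul_of_nonneg_right hdiv hlog4.le]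

end

open Nat

theorem prod_pow_factorization_centralBinom_range_le (n : ℕ) :
    ∏ p ∈ range (2 * n / 3 + 1), p ^ (centralBinom n).factorization p ≤
      (2 * n) ^ sqrt (2 * n) * 4 ^ (2 * n / 3) := by
  set f := fun p => p ^ (centralBinom n).factorization p
  rcases n.eq_zero_or_pos with rfl | hn
  · simp [f]
  have hprimes :
      ∏ p ∈ primesBelow (2 * n / 3 + 1), f p = ∏ p ∈ range (2 * n / 3 + 1), f p :=
    prod_filter_of_ne fun p _ hp => by_contra fun h => hp <| by
      simp [f, factorization_eq_zero_of_not_prime _ h]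
  rw [← hprimes, ← prod_filter_mul_prod_filter_not _ (· ≤ sqrt (2 * n))]
  gcongr
  · calc ∏ p ∈ _ with p ≤ sqrt (2 * n), f p
          ≤ (2 * n) ^ #{p ∈ primesBelow (2 * n / 3 + 1) | p ≤ sqrt (2 * n)} :=
          prod_le_pow_card _ _ _ fun p _ => pow_factorization_choose_le (by omega)
      _ ≤ (2 * n) ^ sqrt (2 * n) := by
          refine pow_le_pow_right₀ (by omega)
            ((card_le_card fun p hp => ?_).trans (card_Icc 1 _).le)
          simp only [mem_filter, mem_primesBelow] at hp
          exact mem_Icc.2 ⟨hp.1.2.one_le, hp.2⟩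
  · calc ∏ p ∈ _ with ¬p ≤ sqrt (2 * n), f p ≤ ∏ p ∈ _ with ¬p ≤ sqrt (2 * n), p :=
          prod_le_prod' fun p hp => by
            simp only [mem_filter, not_le] at hp
            exact (pow_le_pow_right₀ hp.1.2.one_le
              (factorization_choose_le_one (sqrt_lt'.1 hp.2))).trans_eq (pow_one p)
      _ ≤ primorial (2 * n / 3) :=
          prod_le_prod_of_subset_of_one_le' (filter_subset _ _) fun p hp _ =>
            (mem_primesBelow.1 hp).2.one_le
      _ ≤ 4 ^ (2 * n / 3) := primorial_le_four_pow _

theorem centralBinom_le_mul_pow_card_primes_Ioc (n : ℕ) (hn : 2 < n) :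
    centralBinom n ≤
      (2 * n) ^ sqrt (2 * n) * 4 ^ (2 * n / 3) * (2 * n) ^ #{p ∈ Ioc n (2 * n) | p.Prime} := by
  set f := fun p => p ^ (centralBinom n).factorization p
  have hsplit : centralBinom n =
      (∏ p ∈ range (2 * n / 3 + 1), f p) * ∏ p ∈ Ioc n (2 * n) with p.Prime, f p := by
    rw [← prod_union (disjoint_left.2 fun p hp hp' => by
      simp only [mem_range, mem_filter, mem_Ioc] at hp hp'; omega)]
    refine (prod_pow_factorization_centralBinom n).symm.trans
      (prod_subset (fun p hp => by
        simp only [mem_union, mem_range, mem_filter, mem_Ioc] at hp ⊢; omega)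
        fun p hp hp' => ?_).symm
    simp only [mem_union, mem_range, mem_filter, mem_Ioc, not_or, not_and, not_lt] at hp hp'
    by_cases hprime : p.Prime
    · have hpn : p ≤ n := by_contra fun h => hp'.2 ⟨by omega, by omega⟩ hprime
      simp [factorization_centralBinom_of_two_mul_self_lt_three_mul hn hpn (by omega)]
    · simp [factorization_eq_zero_of_not_prime _ hprime]
  rw [hsplit]
  exact mul_le_mul' (prod_pow_factorization_centralBinom_range_le n)
    (prod_le_pow_card _ _ _ fun p _ => pow_factorization_choose_le (by omega))

theorem eventually_le_card_primes_Ioc_two_mul (K : ℕ) :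
    ∀ᶠ n in atTop, K ≤ #{p ∈ Ioc n (2 * n) | p.Prime} := by
  filter_upwards [eventually_mul_pow_mul_four_pow_le K, eventually_ge_atTop 4] with n hineq hn
  by_contra! hcard
  have hlt := calc
    4 ^ n < n * centralBinom n := four_pow_lt_mul_centralBinom n hn
    _ ≤ n * ((2 * n) ^ sqrt (2 * n) * 4 ^ (2 * n / 3) *
          (2 * n) ^ #{p ∈ Ioc n (2 * n) | p.Prime}) :=
        Nat.mul_le_mul_left n (centralBinom_le_mul_pow_card_primes_Ioc n (by omega))
    _ ≤ n * ((2 * n) ^ sqrt (2 * n) * 4 ^ (2 * n / 3) * (2 * n) ^ K) := by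
        gcongr
        omega
    _ = n * (2 * n) ^ (sqrt (2 * n) + K) * 4 ^ (2 * n / 3) := by ring
  exact lt_irrefl _ (hlt.trans_le hineq)

theorem card_le_of_forall_odd_mem_Icc {s : Finset ℕ} {a k : ℕ}
    (hs : ∀ p ∈ s, Odd p ∧ p ∈ Icc a (a + 2 * k + 1)) : #s ≤ k + 1 := by
  refine (card_le_card_of_injOn (fun p => (p - a) / 2) (fun p hp => ?_)
    fun p hp q hq hpq => ?_).trans (card_range _).le
  · obtain ⟨-, hp⟩ := hs p hp
    simp only [mem_Icc] at hp
    simp only [coe_range, Set.mem_Iio]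
    omega
  · obtain ⟨⟨i, rfl⟩, hp⟩ := hs p hp
    obtain ⟨⟨j, rfl⟩, hq⟩ := hs q hq
    simp only [mem_Icc] at hp hq
    simp only at hpq
    omega

/-- Generalized Bertrand theorem: for every positive integer `k` there is a
constant `N` such that every `n > N` admits a prime `p` with
`n/2 < p < n - 2k`, i.e. `n < 2*p` and `p + 2*k < n`. -/
theorem generalized_bertrand :
    ∀ k : ℕ, 0 < k → ∃ N : ℕ, ∀ n : ℕ, N < n →
      ∃ p : ℕ, p.Prime ∧ n < 2 * p ∧ p + 2 * k < n := by
  intro k _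
  obtain ⟨N, hN⟩ := eventually_atTop.1 (eventually_le_card_primes_Ioc_two_mul (k + 2))
  refine ⟨2 * N + 3, fun n hn => ?_⟩
  by_contra! hcon
  set m := (n + 1) / 2 with hm
  have hodd : #{p ∈ Ioc m (2 * m) | p.Prime} ≤ k + 1 := by
    refine card_le_of_forall_odd_mem_Icc (a := n - 2 * k) fun p hp => ?_
    obtain ⟨⟨hmp, hp2m⟩, hprime⟩ := by simpa only [mem_filter, mem_Ioc] using hp
    have hnp : n ≤ p + 2 * k := hcon p hprime (by omega)
    exact ⟨hprime.odd_of_ne_two (by omega), mem_Icc.2 ⟨by omega, by omega⟩⟩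
  have hmany := hN m (by omega)
  omega
end

section
/- For every positive integer k there exists a constant N such that for every prime p > N there is a prime q with (p + 2k - 1)/2 < q < p (i.e., p + 2k - 1 < 2q and q < p). -/
/-!
Quantitative form of Erdős' proof of Bertrand's postulate: in `centralBinom n` the primes
`p ≤ √(2n)` contribute at most `2n` each, those in `(√(2n), 2n/3]` at most the primorial
`4^(2n/3)`, those in `(2n/3, n]` nothing, and each prime in `(n, 2n]` at most `2n`. Against
`4^n < n * centralBinom n` this forces the number of primes in `(n, 2n]` to tend to infinity.
For `n = ⌊(p + 2k - 1)/2⌋` at most `2k` of these primes are `≥ p`, so one lies strictly between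
`(p + 2k - 1)/2` and `p`.
-/

open Filter Asymptotics Finset

namespace Real

lemma isLittleO_sqrt_add_const_mul_log (c : ℝ) :
    (fun y : ℝ => (√y + c) * log y) =o[atTop] id := by
  have hsqrt : (fun y : ℝ => √y * log y) =o[atTop] id := by
    refine ((isBigO_refl sqrt atTop).mul_isLittleO
      (isLittleO_log_rpow_atTop one_half_pos)).congr' (by rfl) ?_
    filter_upwards [eventually_ge_atTop 0] with y hy
    rw [← sqrt_eq_rpow, mul_self_sqrt hy, id]
  exact (hsqrt.add (isLittleO_log_id_atTop.const_mul_left c)).congr_left fun y => by ring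

lemma eventually_mul_rpow_mul_four_rpow_le (c : ℝ) :
    ∀ᶠ x : ℝ in atTop, x * (2 * x) ^ (√(2 * x) + c) * 4 ^ (2 * x / 3) ≤ 4 ^ x := by
  have hsmall : (fun x : ℝ => log x + (√(2 * x) + c) * log (2 * x)) =o[atTop] id :=
    isLittleO_log_id_atTop.add <|
      ((isLittleO_sqrt_add_const_mul_log c).comp_tendsto
        (tendsto_id.const_mul_atTop two_pos)).trans_isBigO
        ((isBigO_refl id atTop).const_mul_left 2)
  have hlog4 : 0 < log 4 / 3 := by positivity
  filter_upwards [hsmall.bound hlog4, eventually_gt_atTop 0] with x hx hpos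
  rw [norm_eq_abs, norm_eq_abs, id, abs_of_pos hpos] at hx
  rw [← log_le_log_iff (by positivity) (by positivity), log_mul (by positivity) (by positivity),
    log_mul hpos.ne' (by positivity), log_rpow (by positivity), log_rpow four_pos,
    log_rpow four_pos]
  linarith [le_abs_self (log x + (√(2 * x) + c) * log (2 * x))]

end Real

namespace Nat

lemma eventually_mul_pow_mul_four_pow_le (K : ℕ) :
    ∀ᶠ n : ℕ in atTop, n * (2 * n) ^ (sqrt (2 * n) + K) * 4 ^ (2 * n / 3) ≤ 4 ^ n := by
  filter_upwards [tendsto_natCast_atTop_atTop.eventually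
    (Real.eventually_mul_rpow_mul_four_rpow_le K), eventually_ge_atTop 1] with n hn hn1
  rw [← Nat.cast_le (α := ℝ)]
  push_cast
  simp only [← Real.rpow_natCast]
  refine le_trans ?_ hn
  push_cast
  gcongr
  · exact_mod_cast (by omega : 1 ≤ 2 * n)
  · exact_mod_cast Real.nat_sqrt_le_real_sqrt
  · norm_num
  · exact Nat.cast_div_le.trans (by norm_cast)

lemma pow_factorization_centralBinom_le_of_sqrt_lt {n p : ℕ} (hn : 2 < n)
    (hsqrt : sqrt (2 * n) < p) (hpn : p.Prime → p ≤ n) :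
    p ^ (centralBinom n).factorization p ≤
      if p ∈ {q ∈ range (2 * n / 3 + 1) | q.Prime} then p else 1 := by
  by_cases hprime : p.Prime
  · specialize hpn hprime
    split_ifs with hS
    · have h2n : 2 * n < p ^ 2 := sqrt_lt'.mp hsqrt
      exact (pow_le_pow_right₀ hprime.one_lt.le (factorization_choose_le_one h2n)).trans_eq
        (pow_one p)
    · have h3p : 2 * n < 3 * p := by
        simp only [mem_filter, mem_range, hprime, and_true, not_lt] at hS
        omega
      rw [factorization_centralBinom_of_two_mul_self_lt_three_mul hn hpn h3p, Nat.pow_zero]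
  · rw [factorization_eq_zero_of_not_prime _ hprime, Nat.pow_zero]
    split_ifs with hS
    · exact (mem_filter.1 hS).2.one_lt.le
    · exact le_rfl

theorem centralBinom_le_pow_mul_four_pow {n : ℕ} (hn : 2 < n) :
    centralBinom n ≤
      (2 * n) ^ (sqrt (2 * n) + 1 + #{p ∈ Ioc n (2 * n) | p.Prime}) * 4 ^ (2 * n / 3) := by
  set A := range (sqrt (2 * n) + 1) ∪ {p ∈ Ioc n (2 * n) | p.Prime}
  set S := {p ∈ range (2 * n / 3 + 1) | p.Prime}
  have hbound (p : ℕ) (hp : p ≤ 2 * n) : p ^ (centralBinom n).factorization p ≤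
      (if p ∈ A then 2 * n else 1) * (if p ∈ S then p else 1) := by
    by_cases hA : p ∈ A
    · have hS : 1 ≤ if p ∈ S then p else 1 := by
        split_ifs with hS
        exacts [(mem_filter.1 hS).2.one_lt.le, le_rfl]
      rw [if_pos hA]
      exact (pow_factorization_choose_le (by omega)).trans (Nat.le_mul_of_pos_right _ hS)
    · rw [if_neg hA, one_mul]
      simp only [A, mem_union, mem_range, mem_filter, mem_Ioc, not_or, not_and, not_lt] at hA
      exact pow_factorization_centralBinom_le_of_sqrt_lt hn (by omega) fun hprime =>
        not_lt.1 fun hnp => hA.2 ⟨hnp, hp⟩ hprime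
  have hS : S ⊆ range (2 * n + 1) :=
    (filter_subset _ _).trans (range_subset_range.mpr (by omega))
  calc centralBinom n = ∏ p ∈ range (2 * n + 1), p ^ (centralBinom n).factorization p :=
        (prod_pow_factorization_centralBinom n).symm
    _ ≤ ∏ p ∈ range (2 * n + 1), (if p ∈ A then 2 * n else 1) * (if p ∈ S then p else 1) :=
        prod_le_prod' fun p hp => hbound p (by simpa [Nat.lt_succ_iff] using hp)
    _ = (2 * n) ^ #(range (2 * n + 1) ∩ A) * primorial (2 * n / 3) := by
        rw [prod_mul_distrib, prod_ite_mem, prod_ite_mem, prod_const, inter_eq_right.mpr hS]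
        rfl
    _ ≤ _ := by
        gcongr
        · omega
        · exact (card_le_card inter_subset_right).trans <| (card_union_le _ _).trans (by simp)
        · exact primorial_le_four_pow _

theorem tendsto_card_primes_Ioc_two_mul :
    Tendsto (fun n => #{p ∈ Ioc n (2 * n) | p.Prime}) atTop atTop := by
  refine tendsto_atTop.2 fun K => ?_
  filter_upwards [eventually_mul_pow_mul_four_pow_le K, eventually_ge_atTop 4] with n hineq hn
  by_contra! hlt
  have hupper : n * centralBinom n ≤ 4 ^ n := calc
    n * centralBinom n ≤
        n * ((2 * n) ^ (sqrt (2 * n) + 1 + #{p ∈ Ioc n (2 * n) | p.Prime}) * 4 ^ (2 * n / 3)) :=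
      Nat.mul_le_mul_left n (centralBinom_le_pow_mul_four_pow (by omega))
    _ ≤ n * ((2 * n) ^ (sqrt (2 * n) + K) * 4 ^ (2 * n / 3)) := by
      gcongr n * (?_ * _)
      exact Nat.pow_le_pow_right (by omega) (by omega)
    _ ≤ 4 ^ n := by rwa [← mul_assoc]
  exact (four_pow_lt_mul_centralBinom n hn).not_ge hupper

lemma exists_prime_of_sub_lt_card {n l m : ℕ} (h : m - l < #{p ∈ Ioc n m | p.Prime}) :
    ∃ q, q.Prime ∧ n < q ∧ q ≤ l := by
  by_contra! hnone
  have hsub : {p ∈ Ioc n m | p.Prime} ⊆ Ioc l m := fun q hq => by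
    simp only [mem_filter, mem_Ioc] at hq ⊢
    exact ⟨hnone q hq.2 hq.1.1, hq.1.2⟩
  have := card_le_card hsub
  rw [card_Ioc] at this
  omega

end Nat

/-- Auxiliary prime-version of the generalized Bertrand theorem: for every
positive integer `k` there is a constant `N` such that every prime `p > N`
admits a prime `q` with `(p + 2k - 1)/2 < q < p`, i.e.
`p + 2*k - 1 < 2*q` and `q < p`. -/
theorem generalized_bertrand_aux :
    ∀ k : ℕ, 0 < k → ∃ N : ℕ, ∀ p : ℕ, p.Prime → N < p →
      ∃ q : ℕ, q.Prime ∧ p + 2 * k - 1 < 2 * q ∧ q < p := by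
  intro k _
  obtain ⟨N, hN⟩ := eventually_atTop.1
    (tendsto_atTop.1 Nat.tendsto_card_primes_Ioc_two_mul (2 * k + 1))
  refine ⟨2 * N, fun p _ hp => ?_⟩
  obtain ⟨q, hq, hnq, hqp⟩ := Nat.exists_prime_of_sub_lt_card (l := p - 1)
    ((show 2 * ((p + 2 * k - 1) / 2) - (p - 1) < 2 * k + 1 by omega).trans_le (hN _ (by omega)))
  exact ⟨q, hq, by omega, by omega⟩
end

section
/- Assume the Baker–Harman–Pintz hypothesis. Then for every real number k ≥ 40/19 there exists a constant N such that for every integer n > N there is a prime p with (n-1)^k < p < n^k, where the powers are real powers. -/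
/-- Baker–Harman–Pintz hypothesis: there is `x₀` such that for all real
`x ≥ x₀` the interval `[x - x^(21/40), x]` contains a prime. -/
def BHP : Prop :=
  ∃ x₀ : ℝ, ∀ x : ℝ, x₀ ≤ x →
    ∃ p : ℕ, p.Prime ∧ x - x ^ ((21 : ℝ) / 40) ≤ (p : ℝ) ∧ (p : ℝ) ≤ x

/-!
For `k ≥ 2` and `t > 2` one has `(t-1)^k ≤ t^(k-2) (t-1)^2`, whence
`t^k - (t-1)^k ≥ 2 t^(k-1) - t^(k-2) > t^(k-1) + 1`. Since `k ≥ 40/19` means exactly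
`(t^k)^(21/40) ≤ t^(k-1)`, the BHP interval ending just below `n^k` lies above `(n-1)^k`.
-/

open Real

lemma sub_one_rpow_add_rpow_sub_one_add_one_lt {t k : ℝ} (ht : 2 < t) (hk : 2 ≤ k) :
    (t - 1) ^ k + t ^ (k - 1) + 1 < t ^ k := by
  have ht₀ : 0 < t := by linarith
  have hsplit : ∀ s : ℝ, 0 < s → ∀ j : ℝ, s ^ (k - 2 + j) = s ^ (k - 2) * s ^ j :=
    fun s hs j ↦ rpow_add hs _ _
  have hsub : (t - 1) ^ (k - 2) ≤ t ^ (k - 2) :=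
    rpow_le_rpow (by linarith) (by linarith) (by linarith)
  have hone : 1 ≤ t ^ (k - 2) := one_le_rpow (by linarith) (by linarith)
  have hk₁ := hsplit t ht₀ 1
  have hk₂ := hsplit t ht₀ 2
  have hk₂' := hsplit (t - 1) (by linarith) 2
  rw [show k - 2 + 1 = k - 1 by ring, rpow_one] at hk₁
  rw [show k - 2 + 2 = k by ring, rpow_two] at hk₂ hk₂'
  rw [hk₁, hk₂, hk₂']
  nlinarith [mul_le_mul_of_nonneg_right hsub (sq_nonneg (t - 1))]

lemma BHP.exists_prime_btwn (h : BHP) :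
    ∃ y₀ : ℝ, ∀ y : ℝ, y₀ ≤ y →
      ∃ p : ℕ, p.Prime ∧ y - y ^ ((21 : ℝ) / 40) - 1 ≤ p ∧ (p : ℝ) < y := by
  obtain ⟨x₀, hx₀⟩ := h
  refine ⟨max (x₀ + 1) 1, fun y hy ↦ ?_⟩
  obtain ⟨p, hp, hlow, hhigh⟩ := hx₀ (y - 1) (by linarith [le_max_left (x₀ + 1) 1])
  have hpow : (y - 1) ^ ((21 : ℝ) / 40) ≤ y ^ ((21 : ℝ) / 40) :=
    rpow_le_rpow (by linarith [le_max_right (x₀ + 1) 1]) (by linarith) (by norm_num)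
  exact ⟨p, hp, by linarith, by linarith⟩

lemma rpow_rpow_twentyOne_div_forty_le {t k : ℝ} (ht : 1 ≤ t) (hk : 40 / 19 ≤ k) :
    (t ^ k) ^ ((21 : ℝ) / 40) ≤ t ^ (k - 1) := by
  rw [← rpow_mul (by linarith)]
  exact rpow_le_rpow_of_exponent_le ht (by linarith)

/-- Exponential theorem: assuming BHP, for every real `k ≥ 40/19` there is a
constant `N` such that every integer `n > N` admits a prime `p` with
`(n-1)^k < p < n^k` (real powers). -/
theorem exponential_theorem (hBHP : BHP) :
    ∀ k : ℝ, (40 : ℝ) / 19 ≤ k → ∃ N : ℕ, ∀ n : ℕ, N < n →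
      ∃ p : ℕ, p.Prime ∧ ((n : ℝ) - 1) ^ k < (p : ℝ) ∧ (p : ℝ) < (n : ℝ) ^ k := by
  intro k hk
  obtain ⟨y₀, hy₀⟩ := hBHP.exists_prime_btwn
  refine ⟨max 2 ⌈y₀⌉₊, fun n hn ↦ ?_⟩
  have hn₂ : (2 : ℝ) < n := by exact_mod_cast (le_max_left _ _).trans_lt hn
  have hny₀ : y₀ ≤ n := (Nat.le_ceil y₀).trans (by exact_mod_cast (le_max_right _ _).trans hn.le)
  have hn_le : (n : ℝ) ≤ (n : ℝ) ^ k :=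
    self_le_rpow_of_one_le (by linarith) (by linarith)
  obtain ⟨p, hp, hlow, hhigh⟩ := hy₀ _ (hny₀.trans hn_le)
  have hgap := sub_one_rpow_add_rpow_sub_one_add_one_lt (k := k) hn₂ (by linarith)
  have hbhp := rpow_rpow_twentyOne_div_forty_le (t := n) (by linarith) hk
  exact ⟨p, hp, by linarith, hhigh⟩
end

section
/- Assume the Baker–Harman–Pintz hypothesis. Then there exists a constant N such that for every integer n > N there is a prime p with (n-1)³ < p < n³. -/
/-- Ingham's exponent-3 theorem (conditional version with explicit constant):
assuming BHP, there is a constant `N` such that every integer `n > N` admits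
a prime `p` with `(n-1)³ < p < n³`. -/
theorem ingham_exponent_three (hBHP : BHP) :
    ∃ N : ℕ, ∀ n : ℕ, N < n →
      ∃ p : ℕ, p.Prime ∧ (n - 1) ^ 3 < p ∧ p < n ^ 3 := by
  obtain ⟨x₀, hx₀⟩ := hBHP
  refine ⟨⌈x₀⌉₊ + 2, fun n hn => ?_⟩
  have hn3 : 3 ≤ n := by omega
  have hnR : (3 : ℝ) ≤ (n : ℝ) := by exact_mod_cast hn3
  set x : ℝ := (n : ℝ) ^ 3 - 1 with hx
  have h9 : (9 : ℝ) ≤ (n : ℝ) ^ 2 := by nlinarith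
  have hxn : (n : ℝ) ≤ x := by nlinarith
  have hx0 : x₀ ≤ x := by
    have h1 : x₀ ≤ (⌈x₀⌉₊ : ℝ) := Nat.le_ceil x₀
    have h2 : (⌈x₀⌉₊ : ℝ) ≤ (n : ℝ) := by
      exact_mod_cast Nat.le_of_lt (by omega : ⌈x₀⌉₊ < n)
    linarith
  obtain ⟨p, hp, hlo, hhi⟩ := hx₀ x hx0
  refine ⟨p, hp, ?_, ?_⟩
  · -- lower bound
    have hxpos : (0 : ℝ) ≤ x := by nlinarith
    have hxle : x ≤ (n : ℝ) ^ 3 := by simp [hx]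
    have key : x ^ ((21 : ℝ) / 40) ≤ (n : ℝ) ^ 2 := by
      have h1 : x ^ ((21 : ℝ) / 40) ≤ ((n : ℝ) ^ 3) ^ ((21 : ℝ) / 40) :=
        Real.rpow_le_rpow hxpos hxle (by norm_num)
      have h2 : ((n : ℝ) ^ 3) ^ ((21 : ℝ) / 40) = (n : ℝ) ^ ((63 : ℝ) / 40) := by
        rw [← Real.rpow_natCast (n : ℝ) 3, ← Real.rpow_mul (by linarith)]
        norm_num
      have h3 : (n : ℝ) ^ ((63 : ℝ) / 40) ≤ (n : ℝ) ^ ((2 : ℕ) : ℝ) :=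
        Real.rpow_le_rpow_of_exponent_le (by linarith) (by norm_num)
      rw [Real.rpow_natCast] at h3
      linarith
    have hlow : ((n : ℝ) - 1) ^ 3 < (p : ℝ) := by nlinarith
    have hcast : ((n - 1 : ℕ) : ℝ) = (n : ℝ) - 1 := by
      push_cast [Nat.cast_sub (by omega : 1 ≤ n)]; ring
    have : ((n - 1 : ℕ) : ℝ) ^ 3 < ((p : ℕ) : ℝ) := by rw [hcast]; exact hlow
    exact_mod_cast this
  · -- upper bound
    have : (p : ℝ) < ((n ^ 3 : ℕ) : ℝ) := by push_cast; nlinarith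
    exact_mod_cast this
end

section
/- Assume the Baker–Harman–Pintz hypothesis. Then there exists a constant N such that for every integer n > N there is a prime p with (n-1)² < p^(19/20) < n², where p^(19/20) is a real power. -/
open Real

lemma bernoulli_step {t : ℝ} (ht : 1 ≤ t) :
    t ^ ((40:ℝ)/19) + (40/19) * t ^ ((21:ℝ)/19) ≤ (t+1) ^ ((40:ℝ)/19) := by
  have ht0 : (0:ℝ) < t := by linarith
  have h1 : (1 : ℝ) + (40/19) * (1/t) ≤ (1 + 1/t) ^ ((40:ℝ)/19) :=
    one_add_mul_self_le_rpow_one_add (by have := one_div_nonneg.mpr ht0.le; linarith) (by norm_num)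
  have heq : (t+1) = t * (1 + 1/t) := by field_simp
  have h2 : (t+1) ^ ((40:ℝ)/19) = t ^ ((40:ℝ)/19) * (1 + 1/t) ^ ((40:ℝ)/19) := by
    rw [heq, Real.mul_rpow ht0.le (by positivity)]
  have h3 : t ^ ((40:ℝ)/19) * (1 + (40/19) * (1/t)) ≤ (t+1) ^ ((40:ℝ)/19) := by
    rw [h2]
    exact mul_le_mul_of_nonneg_left h1 (by positivity)
  have h4 : t ^ ((40:ℝ)/19) * (1/t) = t ^ ((21:ℝ)/19) := by
    rw [show (21:ℝ)/19 = 40/19 - 1 by norm_num, Real.rpow_sub ht0, Real.rpow_one, mul_one_div]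
  calc t ^ ((40:ℝ)/19) + (40/19) * t ^ ((21:ℝ)/19)
      = t ^ ((40:ℝ)/19) * (1 + (40/19) * (1/t)) := by rw [mul_add, mul_one, ← mul_assoc,
        mul_comm (t ^ ((40:ℝ)/19)) ((40:ℝ)/19), mul_assoc, h4]
    _ ≤ (t+1) ^ ((40:ℝ)/19) := h3

lemma key_ineq {t : ℝ} (ht : 99 ≤ t) :
    t ^ ((40:ℝ)/19) + (t+1) ^ ((21:ℝ)/19) + 1 < (t+1) ^ ((40:ℝ)/19) := by
  have ht0 : (0:ℝ) < t := by linarith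
  have hb := bernoulli_step (by linarith : (1:ℝ) ≤ t)
  -- (t+1)^(21/19) ≤ (100/99)^2 * t^(21/19)
  have h1 : (t+1) ≤ (100/99) * t := by linarith
  have h2 : (t+1) ^ ((21:ℝ)/19) ≤ ((100/99) * t) ^ ((21:ℝ)/19) :=
    Real.rpow_le_rpow (by linarith) h1 (by norm_num)
  have h3 : ((100/99 : ℝ) * t) ^ ((21:ℝ)/19)
      = (100/99 : ℝ) ^ ((21:ℝ)/19) * t ^ ((21:ℝ)/19) :=
    Real.mul_rpow (by norm_num) ht0.le
  have h4 : (100/99 : ℝ) ^ ((21:ℝ)/19) ≤ (100/99 : ℝ) ^ ((2:ℝ)) :=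
    Real.rpow_le_rpow_of_exponent_le (by norm_num) (by norm_num)
  have h5 : (100/99 : ℝ) ^ ((2:ℝ)) = 10000/9801 := by
    rw [show ((2:ℝ)) = ((2:ℕ):ℝ) by norm_num, Real.rpow_natCast]; norm_num
  have h6 : (t+1) ^ ((21:ℝ)/19) ≤ (10000/9801) * t ^ ((21:ℝ)/19) := by
    have := mul_le_mul_of_nonneg_right (h4.trans_eq h5) (Real.rpow_nonneg ht0.le ((21:ℝ)/19))
    calc (t+1) ^ ((21:ℝ)/19) ≤ _ := h2
      _ = _ := h3
      _ ≤ _ := this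
  have h7 : t ≤ t ^ ((21:ℝ)/19) := by
    nth_rewrite 1 [← Real.rpow_one t]
    exact Real.rpow_le_rpow_of_exponent_le (by linarith) (by norm_num)
  nlinarith [h6, h7, hb]

/-- Quasi-Legendre theorem: assuming BHP, there is a constant `N` such that
every integer `n > N` admits a prime `p` with `(n-1)² < p^(19/20) < n²`. -/
theorem quasi_legendre (hBHP : BHP) :
    ∃ N : ℕ, ∀ n : ℕ, N < n →
      ∃ p : ℕ, p.Prime ∧
        ((n : ℝ) - 1) ^ 2 < (p : ℝ) ^ ((19 : ℝ) / 20) ∧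
        (p : ℝ) ^ ((19 : ℝ) / 20) < (n : ℝ) ^ 2 := by
  obtain ⟨x₀, hx₀⟩ := hBHP
  refine ⟨max 100 (⌈x₀⌉₊ + 1), fun n hn => ?_⟩
  have hn100 : 100 < n := lt_of_le_of_lt (le_max_left _ _) hn
  have hnx₀ : ⌈x₀⌉₊ + 1 < n := lt_of_le_of_lt (le_max_right _ _) hn
  have hnR : (100:ℝ) < (n:ℝ) := by exact_mod_cast hn100
  have hn1 : (1:ℝ) ≤ (n:ℝ) := by linarith
  set x : ℝ := (n:ℝ) ^ ((40:ℝ)/19) - 1 with hxdef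
  have hnn : (n:ℝ) ≤ (n:ℝ) ^ ((40:ℝ)/19) := by
    nth_rewrite 1 [← Real.rpow_one (n:ℝ)]
    exact Real.rpow_le_rpow_of_exponent_le hn1 (by norm_num)
  have hxx₀ : x₀ ≤ x := by
    have h1 : x₀ ≤ (⌈x₀⌉₊ : ℝ) := Nat.le_ceil x₀
    have h2 : (⌈x₀⌉₊ : ℝ) + 1 < (n:ℝ) := by exact_mod_cast hnx₀
    simp only [hxdef]; linarith
  obtain ⟨p, hp, hp1, hp2⟩ := hx₀ x hxx₀
  have hx0 : (0:ℝ) < x := by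
    simp only [hxdef]; linarith
  have hppos : (0:ℝ) < p := by
    exact_mod_cast hp.pos
  refine ⟨p, hp, ?_, ?_⟩
  · -- lower bound
    have hkey := key_ineq (t := (n:ℝ) - 1) (by linarith)
    have ht1 : (n:ℝ) - 1 + 1 = (n:ℝ) := by ring
    rw [ht1] at hkey
    have hx21 : x ^ ((21:ℝ)/40) ≤ (n:ℝ) ^ ((21:ℝ)/19) := by
      have h1 : x ≤ (n:ℝ) ^ ((40:ℝ)/19) := by simp only [hxdef]; linarith
      have h2 : x ^ ((21:ℝ)/40) ≤ ((n:ℝ) ^ ((40:ℝ)/19)) ^ ((21:ℝ)/40) :=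
        Real.rpow_le_rpow hx0.le h1 (by norm_num)
      have h3 : ((n:ℝ) ^ ((40:ℝ)/19)) ^ ((21:ℝ)/40) = (n:ℝ) ^ ((21:ℝ)/19) := by
        rw [← Real.rpow_mul (by positivity)]; norm_num
      linarith [h2.trans_eq h3]
    have hplow : ((n:ℝ) - 1) ^ ((40:ℝ)/19) < (p:ℝ) := by
      have : x - x ^ ((21:ℝ)/40) ≥ (n:ℝ) ^ ((40:ℝ)/19) - 1 - (n:ℝ) ^ ((21:ℝ)/19) := by
        simp only [hxdef]; linarith
      linarith
    have := Real.rpow_lt_rpow (Real.rpow_nonneg (by linarith) _) hplow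
      (by norm_num : (0:ℝ) < 19/20)
    rw [← Real.rpow_mul (by linarith : (0:ℝ) ≤ (n:ℝ) - 1)] at this
    norm_num at this
    calc ((n:ℝ) - 1) ^ 2 = ((n:ℝ) - 1) ^ ((2:ℝ)) := by
          rw [show ((2:ℝ)) = ((2:ℕ):ℝ) by norm_num, Real.rpow_natCast]
      _ < (p:ℝ) ^ ((19:ℝ)/20) := by
          convert this using 2; norm_num
  · -- upper bound
    have hplt : (p:ℝ) < (n:ℝ) ^ ((40:ℝ)/19) := by
      simp only [hxdef] at hp2; linarith
    have := Real.rpow_lt_rpow hppos.le hplt (by norm_num : (0:ℝ) < 19/20)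
    rw [← Real.rpow_mul (by positivity)] at this
    calc (p:ℝ) ^ ((19:ℝ)/20) < (n:ℝ) ^ ((40:ℝ)/19 * (19/20)) := this
      _ = (n:ℝ) ^ 2 := by
          rw [show (40:ℝ)/19 * (19/20) = 2 by norm_num,
            show ((2:ℝ)) = ((2:ℕ):ℝ) by norm_num, Real.rpow_natCast]
end

section
/- Assume the Baker–Harman–Pintz hypothesis. Then there exists a constant N such that for every integer n > N, the number of primes p satisfying (n-1)³ < p < n³ is at least n^(17/40) - 3 (as real numbers, with the cardinality cast to a real). -/
/-- Assuming BHP, there is a constant `N` such that for every integer `n > N`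
the number of primes in `((n-1)³, n³)` is at least `n^(17/40) - 3`. -/
theorem prime_count_cubes (hBHP : BHP) :
    ∃ N : ℕ, ∀ n : ℕ, N < n →
      (n : ℝ) ^ ((17 : ℝ) / 40) - 3 ≤
        (((Finset.range (n ^ 3)).filter
          (fun p => p.Prime ∧ (n - 1) ^ 3 < p ∧ p < n ^ 3)).card : ℝ) := by
  obtain ⟨x₀, hx₀⟩ := hBHP
  refine ⟨max 50 (⌈max x₀ 0⌉₊ + 1), fun n hn => ?_⟩
  have hn50 : 50 ≤ n := le_trans (le_max_left _ _) hn.le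
  have hnx : (⌈max x₀ 0⌉₊ + 1 : ℕ) ≤ n := le_trans (le_max_right _ _) hn.le
  have hn1 : 1 ≤ n := by omega
  have hn0 : (0 : ℝ) < n := by positivity
  have hn1R : (1 : ℝ) ≤ (n : ℝ) := by exact_mod_cast hn1
  have hn50R : (50 : ℝ) ≤ (n : ℝ) := by exact_mod_cast hn50
  set a : ℝ := (n : ℝ) ^ ((17 : ℝ) / 40) with ha_def
  set b : ℝ := (n : ℝ) ^ ((63 : ℝ) / 40) with hb_def
  set K : ℕ := ⌈a⌉₊ with hK_def
  set L : ℝ := b + 1 with hL_def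
  have ha0 : 0 < a := Real.rpow_pos_of_pos hn0 _
  have hb0 : 0 < b := Real.rpow_pos_of_pos hn0 _
  have hL0 : (0 : ℝ) < L := by linarith
  have hab : a * b = (n : ℝ) ^ 2 := by
    rw [ha_def, hb_def, ← Real.rpow_add hn0]
    norm_num
  have ha3 : (3 : ℝ) ≤ a := by
    have h1 : (3 : ℝ) ^ (40 : ℕ) ≤ (n : ℝ) ^ (17 : ℕ) := by
      calc (3 : ℝ) ^ (40 : ℕ) ≤ (50 : ℝ) ^ (17 : ℕ) := by norm_num
        _ ≤ (n : ℝ) ^ (17 : ℕ) := by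
            exact pow_le_pow_left₀ (by norm_num) hn50R 17
    have h2 : ((3 : ℝ) ^ (40 : ℕ)) ^ ((1 : ℝ) / 40) ≤ ((n : ℝ) ^ (17 : ℕ)) ^ ((1 : ℝ) / 40) :=
      Real.rpow_le_rpow (by positivity) h1 (by norm_num)
    calc (3 : ℝ) = ((3 : ℝ) ^ (40 : ℕ)) ^ ((1 : ℝ) / 40) := by
          rw [← Real.rpow_natCast (3 : ℝ) 40, ← Real.rpow_mul (by norm_num)]; norm_num
      _ ≤ ((n : ℝ) ^ (17 : ℕ)) ^ ((1 : ℝ) / 40) := h2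
      _ = a := by
          rw [← Real.rpow_natCast (n : ℝ) 17, ← Real.rpow_mul hn0.le, ha_def]
          norm_num
  have hba : a ≤ b := Real.rpow_le_rpow_of_exponent_le hn1R (by norm_num)
  have hb1 : (1 : ℝ) ≤ b := by linarith
  have hKa : (K : ℝ) < a + 1 := Nat.ceil_lt_add_one ha0.le
  have hKL : (K : ℝ) * L ≤ (n : ℝ) ^ 3 - ((n : ℝ) - 1) ^ 3 := by
    have h3b : 3 * b ≤ (n : ℝ) ^ 2 := by nlinarith
    have hKL1 : (K : ℝ) * L ≤ (a + 1) * (b + 1) := by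
      apply mul_le_mul hKa.le le_rfl hL0.le (by linarith)
    nlinarith
  -- the cube rpow identity
  have hcube : ((n : ℝ) ^ 3) ^ ((21 : ℝ) / 40) = b := by
    rw [← Real.rpow_natCast (n : ℝ) 3, ← Real.rpow_mul hn0.le, hb_def]
    norm_num
  -- key step: a prime in each window
  have key : ∀ k : ℕ, ∃ p : ℕ, k < K →
      p.Prime ∧ (n : ℝ) ^ 3 - (k + 1) * L < (p : ℝ) ∧ (p : ℝ) ≤ (n : ℝ) ^ 3 - k * L := by
    intro k
    by_cases hk : k < K
    · set x : ℝ := (n : ℝ) ^ 3 - k * L with hx_def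
      have hkK : ((k : ℝ)) * L ≤ (K : ℝ) * L := by
        apply mul_le_mul_of_nonneg_right _ hL0.le
        exact_mod_cast hk.le
      have hxlb : ((n : ℝ) - 1) ^ 3 ≤ x := by
        rw [hx_def]; linarith
      have hn1cube : (n : ℝ) - 1 ≤ ((n : ℝ) - 1) ^ 3 :=
        le_self_pow₀ (by linarith) (by norm_num)
      have hx₀x : x₀ ≤ x := by
        have h1 : x₀ ≤ (⌈max x₀ 0⌉₊ : ℝ) := le_trans (le_max_left _ _) (Nat.le_ceil _)
        have h2 : (⌈max x₀ 0⌉₊ : ℝ) ≤ (n : ℝ) - 1 := by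
          have : ((⌈max x₀ 0⌉₊ + 1 : ℕ) : ℝ) ≤ (n : ℝ) := by exact_mod_cast hnx
          push_cast at this
          linarith
        linarith
      have hxub : x ≤ (n : ℝ) ^ 3 := by
        rw [hx_def]
        have : (0 : ℝ) ≤ (k : ℝ) * L := by positivity
        linarith
      have hx0 : (0 : ℝ) ≤ x := by nlinarith
      obtain ⟨p, hp, hplb, hpub⟩ := hx₀ x hx₀x
      refine ⟨p, fun _ => ⟨hp, ?_, hpub⟩⟩
      have hxr : x ^ ((21 : ℝ) / 40) ≤ b := by
        rw [← hcube]
        exact Real.rpow_le_rpow hx0 hxub (by norm_num)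
      have : x - b ≤ (p : ℝ) := by linarith
      rw [hx_def] at this
      have h1L : ((k : ℝ) + 1) * L = k * L + b + 1 := by rw [hL_def]; ring
      linarith
    · exact ⟨2, fun h => absurd h hk⟩
  choose f hf using key
  -- map `Finset.range K` injectively into the prime set
  have hmaps : ∀ k ∈ Finset.range K,
      f k ∈ (Finset.range (n ^ 3)).filter
        (fun p => p.Prime ∧ (n - 1) ^ 3 < p ∧ p < n ^ 3) := by
    intro k hk
    rw [Finset.mem_range] at hk
    obtain ⟨hp, hlb, hub⟩ := hf k hk
    have hcastcube : ((n ^ 3 : ℕ) : ℝ) = (n : ℝ) ^ 3 := by push_cast; ring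
    have hplen : f k ≤ n ^ 3 := by
      rw [← Nat.cast_le (α := ℝ), hcastcube]
      have hk0 : (0 : ℝ) ≤ (k : ℝ) * L := by positivity
      linarith
    have hpne : f k ≠ n ^ 3 := by
      intro h
      rw [h] at hp
      rcases (Nat.Prime.eq_one_or_self_of_dvd hp n (dvd_pow_self n (by norm_num))) with h1 | h1
      · omega
      · have h2 : (n : ℝ) = (n : ℝ) ^ 3 := by exact_mod_cast h1
        nlinarith [hn50R]
    have hplt : f k < n ^ 3 := lt_of_le_of_ne hplen hpne
    have hcastsub : (((n - 1) ^ 3 : ℕ) : ℝ) = ((n : ℝ) - 1) ^ 3 := by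
      rw [Nat.cast_pow, Nat.cast_sub hn1, Nat.cast_one]
    have hklb : ((n - 1) ^ 3 : ℕ) < f k := by
      rw [← Nat.cast_lt (α := ℝ), hcastsub]
      have hkK : ((k : ℝ) + 1) * L ≤ (K : ℝ) * L := by
        apply mul_le_mul_of_nonneg_right _ hL0.le
        have : (k + 1 : ℕ) ≤ K := hk
        exact_mod_cast this
      calc ((n : ℝ) - 1) ^ 3 ≤ (n : ℝ) ^ 3 - (K : ℝ) * L := by linarith
        _ ≤ (n : ℝ) ^ 3 - ((k : ℝ) + 1) * L := by linarith
        _ < f k := by exact_mod_cast hlb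
    simp only [Finset.mem_filter, Finset.mem_range]
    exact ⟨hplt, hp, hklb, hplt⟩
  have hinj : Set.InjOn f (Finset.range K) := by
    have hmono : ∀ i j : ℕ, i < j → j < K → (f j : ℝ) < (f i : ℝ) := by
      intro i j hij hjK
      obtain ⟨_, hilb, _⟩ := hf i (lt_trans hij hjK)
      obtain ⟨_, _, hjub⟩ := hf j hjK
      have : ((i : ℝ) + 1) * L ≤ (j : ℝ) * L := by
        apply mul_le_mul_of_nonneg_right _ hL0.le
        have : (i + 1 : ℕ) ≤ j := hij
        exact_mod_cast this
      calc (f j : ℝ) ≤ (n : ℝ) ^ 3 - (j : ℝ) * L := hjub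
        _ ≤ (n : ℝ) ^ 3 - ((i : ℝ) + 1) * L := by linarith
        _ < f i := hilb
    intro i hi j hj hij
    simp only [Finset.coe_range, Set.mem_Iio] at hi hj
    by_contra hne
    rcases lt_or_gt_of_ne hne with h | h
    · exact absurd (congrArg (Nat.cast (R := ℝ)) hij) (ne_of_gt (hmono i j h hj))
    · exact absurd (congrArg (Nat.cast (R := ℝ)) hij) (ne_of_lt (hmono j i h hi))
  have hcard : K ≤ ((Finset.range (n ^ 3)).filter
      (fun p => p.Prime ∧ (n - 1) ^ 3 < p ∧ p < n ^ 3)).card := by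
    have := Finset.card_le_card_of_injOn f hmaps hinj
    simpa using this
  have : (K : ℝ) ≤ (((Finset.range (n ^ 3)).filter
      (fun p => p.Prime ∧ (n - 1) ^ 3 < p ∧ p < n ^ 3)).card : ℝ) := by
    exact_mod_cast hcard
  have haK : a ≤ (K : ℝ) := Nat.le_ceil a
  linarith
end

section
/- Assume the Baker–Harman–Pintz hypothesis. Then there exists a constant N such that for every integer n > N there exist two distinct primes p and q with (n-1)³ < p < n³ and (n-1)³ < q < n³. -/
lemma rpow_bound {x m : ℝ} (hm : 1 ≤ m) (hx1 : 1 ≤ x) (hx : x ≤ m ^ 3) :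
    x ^ ((21 : ℝ) / 40) ≤ m ^ 2 := by
  have h0 : (0 : ℝ) ≤ m := by linarith
  calc x ^ ((21 : ℝ) / 40) ≤ x ^ ((2 : ℝ) / 3) :=
        Real.rpow_le_rpow_of_exponent_le hx1 (by norm_num)
    _ ≤ (m ^ 3) ^ ((2 : ℝ) / 3) :=
        Real.rpow_le_rpow (by linarith) hx (by norm_num)
    _ = m ^ 2 := by
        rw [← Real.rpow_natCast m 3, ← Real.rpow_mul h0]
        norm_num

/-- Strong theorem (exponent 3): assuming BHP, there is a constant `N` such
that every integer `n > N` admits two distinct primes `p, q` with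
`(n-1)³ < p, q < n³`. -/
theorem strong_exponent_three (hBHP : BHP) :
    ∃ N : ℕ, ∀ n : ℕ, N < n →
      ∃ p q : ℕ, p.Prime ∧ q.Prime ∧ p ≠ q ∧
        (n - 1) ^ 3 < p ∧ p < n ^ 3 ∧ (n - 1) ^ 3 < q ∧ q < n ^ 3 := by
  obtain ⟨x₀, hx₀⟩ := hBHP
  refine ⟨⌈x₀⌉₊ + 10, fun n hn => ?_⟩
  set m : ℝ := (n : ℝ) with hm_def
  have hn11 : 11 ≤ n := by omega
  have hm11 : (11 : ℝ) ≤ m := by rw [hm_def]; exact_mod_cast hn11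
  have hm1 : (1 : ℝ) ≤ m := by linarith
  have hceil : (⌈x₀⌉₊ : ℝ) + 11 ≤ m := by
    have h : ⌈x₀⌉₊ + 11 ≤ n := by omega
    rw [hm_def]; exact_mod_cast h
  have hx0m : x₀ ≤ m - 10 := by
    have := Nat.le_ceil x₀
    linarith
  -- polynomial facts
  have h1 : (121 : ℝ) ≤ m ^ 2 := by nlinarith
  have h2 : 11 * m ^ 2 ≤ m ^ 3 := by
    nlinarith [mul_nonneg (by linarith : (0:ℝ) ≤ m - 11) (sq_nonneg m)]
  have h3 : m ≤ m ^ 2 := by nlinarith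
  have h4 : 11 * m ≤ m ^ 2 := by nlinarith
  -- first application of BHP at m^3 - 1
  obtain ⟨p, hp, hp1, hp2⟩ := hx₀ (m ^ 3 - 1) (by linarith)
  have hpow1 : (m ^ 3 - 1) ^ ((21 : ℝ) / 40) ≤ m ^ 2 :=
    rpow_bound hm1 (by linarith) (by linarith)
  have hp_lo : m ^ 3 - 1 - m ^ 2 ≤ (p : ℝ) := by linarith
  -- second application at p - 1
  obtain ⟨q, hq, hq1, hq2⟩ := hx₀ ((p : ℝ) - 1) (by linarith)
  have hpow2 : ((p : ℝ) - 1) ^ ((21 : ℝ) / 40) ≤ m ^ 2 :=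
    rpow_bound hm1 (by linarith) (by linarith)
  have hq_lo : m ^ 3 - 2 - 2 * m ^ 2 ≤ (q : ℝ) := by linarith
  -- q < p
  have hqp : q < p := by
    have : (q : ℝ) < (p : ℝ) := by linarith
    exact_mod_cast this
  -- p < n^3
  have hpn : p < n ^ 3 := by
    have h : (p : ℝ) < m ^ 3 := by linarith
    rw [hm_def] at h
    exact_mod_cast h
  -- (n-1)^3 < q
  have hn1 : (1 : ℕ) ≤ n := by omega
  have hcast : ((n - 1 : ℕ) : ℝ) = m - 1 := by
    rw [hm_def]; push_cast [hn1]; ring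
  have hq_lo' : (n - 1) ^ 3 < q := by
    have h : ((n - 1 : ℕ) : ℝ) ^ 3 < (q : ℝ) := by
      rw [hcast]; nlinarith [h4, hm11, hq_lo]
    exact_mod_cast h
  exact ⟨p, q, hp, hq, ne_of_gt hqp, lt_trans hq_lo' hqp, hpn, hq_lo',
    lt_trans hqp hpn⟩
end

section
/- Assume the Baker–Harman–Pintz hypothesis. Then there exists a constant N such that for all consecutive primes p' < p with p' > N, the open interval (p'³, p³) contains at least four primes. -/
lemma bhp_key (q x : ℝ) (hq : (10^6 : ℝ) ≤ q) (hx1 : q^3 ≤ x)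
    (hx2 : x ≤ q^3 + 3*q^2) : x ^ ((21:ℝ)/40) < 3/4 * q^2 := by
  have hq0 : (0:ℝ) < q := by linarith
  have hx0 : (0:ℝ) < x := by nlinarith
  have h8 : x ≤ 8*q^3 := by nlinarith
  have hB : (0:ℝ) < 3/4*q^2 := by positivity
  have hpow : (x ^ ((21:ℝ)/40))^(40:ℕ) = x^(21:ℕ) := by
    rw [← Real.rpow_natCast (x ^ ((21:ℝ)/40)) 40, ← Real.rpow_mul hx0.le,
      show (21:ℝ)/40*(40:ℕ) = ((21:ℕ):ℝ) by norm_num, Real.rpow_natCast]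
  refine lt_of_pow_lt_pow_left₀ 40 hB.le ?_
  rw [hpow]
  have h17 : (10^6:ℝ)^17 ≤ q^17 := pow_le_pow_left₀ (by norm_num) hq 17
  have hc : (8:ℝ)^21 < (3/4)^40 * (10^6:ℝ)^17 := by norm_num
  calc x^21 ≤ (8*q^3)^21 := pow_le_pow_left₀ hx0.le h8 21
    _ = 8^21 * q^63 := by ring
    _ < ((3/4)^40 * q^17) * q^63 := by
        have hq63 : (0:ℝ) < q^63 := by positivity
        have h : (8:ℝ)^21 < (3/4)^40 * q^17 :=
          hc.trans_le (mul_le_mul_of_nonneg_left h17 (by positivity))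
        exact mul_lt_mul_of_pos_right h hq63
    _ = (3/4*q^2)^40 := by ring

lemma bhp_step (x₀ q c : ℝ)
    (hB : ∀ x : ℝ, x₀ ≤ x → ∃ p : ℕ, p.Prime ∧ x - x ^ ((21:ℝ)/40) ≤ (p:ℝ) ∧ (p:ℝ) ≤ x)
    (hq : (10^6:ℝ) ≤ q) (hx₀ : x₀ ≤ q^3) (hc0 : 0 ≤ c) (hc3 : c ≤ 3) :
    ∃ r : ℕ, r.Prime ∧ q^3 + c*(3/4*q^2) < (r:ℝ) ∧ (r:ℝ) ≤ q^3 + (c+1)*(3/4*q^2) := by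
  have hq0 : (0:ℝ) < q := by linarith
  have hq2 : (0:ℝ) ≤ q^2 := sq_nonneg q
  have hx1 : q^3 ≤ q^3 + (c+1)*(3/4*q^2) := by nlinarith
  have hx2 : q^3 + (c+1)*(3/4*q^2) ≤ q^3 + 3*q^2 := by nlinarith
  have hkey := bhp_key q (q^3 + (c+1)*(3/4*q^2)) hq hx1 hx2
  obtain ⟨r, hr, hlo, hhi⟩ := hB (q^3 + (c+1)*(3/4*q^2)) (by linarith)
  refine ⟨r, hr, ?_, hhi⟩
  nlinarith [hlo, hkey]

set_option maxHeartbeats 1000000 in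
/-- Brocard's theorem (exponent 3): assuming BHP, there is a constant `N`
such that for all consecutive primes `p' < p` with `p' > N`, the interval
`(p'³, p³)` contains at least four primes. -/
theorem brocard_exponent_three (hBHP : BHP) :
    ∃ N : ℕ, ∀ p' p : ℕ, p'.Prime → p.Prime → p' < p →
      (∀ r : ℕ, r.Prime → ¬(p' < r ∧ r < p)) → N < p' →
      4 ≤ ((Finset.range (p ^ 3)).filter
            (fun q => q.Prime ∧ p' ^ 3 < q ∧ q < p ^ 3)).card := by
  obtain ⟨x₀, hB⟩ := hBHP
  refine ⟨max (10^6) ⌈x₀⌉₊, ?_⟩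
  intro p' p hp' hp hlt _ hN
  have hN1 : 10^6 < p' := lt_of_le_of_lt (le_max_left _ _) hN
  have hN2 : ⌈x₀⌉₊ < p' := lt_of_le_of_lt (le_max_right _ _) hN
  have hq6 : (10^6:ℝ) ≤ (p':ℝ) := by exact_mod_cast hN1.le
  have hq0 : (0:ℝ) < (p':ℝ) := by linarith
  have hq1 : (1:ℝ) ≤ (p':ℝ) := by linarith
  have hcube : (0:ℝ) ≤ (p':ℝ)*(((p':ℝ)-1)*((p':ℝ)+1)) :=
    mul_nonneg hq0.le (mul_nonneg (by linarith) (by linarith))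
  have hq3 : (p':ℝ) ≤ (p':ℝ)^3 := by nlinarith [hcube]
  have hx₀ : x₀ ≤ (p':ℝ)^3 := by
    have h1 : x₀ ≤ (⌈x₀⌉₊ : ℝ) := Nat.le_ceil x₀
    have h2 : ((⌈x₀⌉₊ : ℕ) : ℝ) ≤ (p':ℝ) := by exact_mod_cast hN2.le
    linarith
  obtain ⟨r1, hr1p, hr1lo, hr1hi⟩ := bhp_step x₀ (p':ℝ) 0 hB hq6 hx₀ le_rfl (by norm_num)
  obtain ⟨r2, hr2p, hr2lo, hr2hi⟩ := bhp_step x₀ (p':ℝ) 1 hB hq6 hx₀ (by norm_num) (by norm_num)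
  obtain ⟨r3, hr3p, hr3lo, hr3hi⟩ := bhp_step x₀ (p':ℝ) 2 hB hq6 hx₀ (by norm_num) (by norm_num)
  obtain ⟨r4, hr4p, hr4lo, hr4hi⟩ := bhp_step x₀ (p':ℝ) 3 hB hq6 hx₀ (by norm_num) (by norm_num)
  have hply : ((p':ℝ) + 1) ≤ (p : ℝ) := by exact_mod_cast Nat.succ_le_of_lt hlt
  have hq2 : (0:ℝ) ≤ (p':ℝ)^2 := sq_nonneg _
  have hp3 : (p':ℝ)^3 + 3*(p':ℝ)^2 + 1 ≤ (p:ℝ)^3 := by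
    have h := pow_le_pow_left₀ (by positivity : (0:ℝ) ≤ (p':ℝ)+1) hply 3
    nlinarith [h]
  have c1 : ((p':ℝ))^3 < r1 := by nlinarith
  have c12 : (r1:ℝ) < r2 := by nlinarith
  have c23 : (r2:ℝ) < r3 := by nlinarith
  have c34 : (r3:ℝ) < r4 := by nlinarith
  have c4 : (r4:ℝ) < (p:ℝ)^3 := by nlinarith
  have hlo1 : p'^3 < r1 := by exact_mod_cast (show ((p'^3 : ℕ):ℝ) < r1 by push_cast; exact c1)
  have h12 : r1 < r2 := by exact_mod_cast c12
  have h23 : r2 < r3 := by exact_mod_cast c23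
  have h34 : r3 < r4 := by exact_mod_cast c34
  have hhi4 : r4 < p^3 := by exact_mod_cast (show (r4:ℝ) < ((p^3:ℕ):ℝ) by push_cast; exact c4)
  have mem : ∀ r : ℕ, r.Prime → p'^3 < r → r < p^3 →
      r ∈ (Finset.range (p ^ 3)).filter (fun q => q.Prime ∧ p' ^ 3 < q ∧ q < p ^ 3) := by
    intro r hrp hlo hhi
    simp only [Finset.mem_filter, Finset.mem_range]
    exact ⟨hhi, hrp, hlo, hhi⟩
  have hsub : ({r1, r2, r3, r4} : Finset ℕ) ⊆
      (Finset.range (p ^ 3)).filter (fun q => q.Prime ∧ p' ^ 3 < q ∧ q < p ^ 3) := by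
    intro x hx
    simp only [Finset.mem_insert, Finset.mem_singleton] at hx
    rcases hx with h | h | h | h <;> rw [h]
    · exact mem r1 hr1p hlo1 (by omega)
    · exact mem r2 hr2p (by omega) (by omega)
    · exact mem r3 hr3p (by omega) (by omega)
    · exact mem r4 hr4p (by omega) hhi4
  have hcard : ({r1, r2, r3, r4} : Finset ℕ).card = 4 := by
    rw [Finset.card_insert_of_notMem (by
          simp only [Finset.mem_insert, Finset.mem_singleton]; push_neg; omega),
        Finset.card_insert_of_notMem (by
          simp only [Finset.mem_insert, Finset.mem_singleton]; push_neg; omega),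
        Finset.card_insert_of_notMem (by
          simp only [Finset.mem_singleton]; omega),
        Finset.card_singleton]
  calc (4:ℕ) = ({r1, r2, r3, r4} : Finset ℕ).card := hcard.symm
    _ ≤ _ := Finset.card_le_card hsub
end

section
/- Assume the Baker–Harman–Pintz hypothesis. Then for every positive integer k there exists a constant N such that for all consecutive primes p' < p with p' > N, the open interval (p'³, p³) contains at least 2k primes. -/
set_option maxHeartbeats 800000

/-- Key iteration: if `[a, b]` is long enough (in terms of a uniform bound `c`
on `x ^ (21/40)` for `x ≤ b`), then `(a, b]` contains at least `n` primes. -/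
lemma bhp_many_primes (x₀ : ℝ)
    (h : ∀ x : ℝ, x₀ ≤ x →
      ∃ p : ℕ, p.Prime ∧ x - x ^ ((21 : ℝ) / 40) ≤ (p : ℝ) ∧ (p : ℝ) ≤ x) :
    ∀ n a b c : ℕ, x₀ ≤ (a : ℝ) → ((b : ℝ) ^ ((21 : ℝ) / 40) ≤ c) →
      a + n * (c + 1) ≤ b → n ≤ ((Finset.Ioc a b).filter Nat.Prime).card := by
  intro n
  induction n with
  | zero => intros; exact Nat.zero_le _
  | succ m ih =>
    intro a b c hx0 hc hab
    have hab' : a ≤ b := le_trans (Nat.le_add_right _ _) hab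
    obtain ⟨q, hq, hq1, hq2⟩ := h b (le_trans hx0 (by exact_mod_cast hab'))
    have hqb : q ≤ b := by exact_mod_cast hq2
    have expand : ((m : ℝ) + 1) * ((c : ℝ) + 1) = m * (c + 1) + c + 1 := by ring
    have habR : (a : ℝ) + ((m : ℝ) + 1) * ((c : ℝ) + 1) ≤ b := by exact_mod_cast hab
    have keyR : (a : ℝ) + m * (c + 1) + 1 ≤ q := by
      have h1 : (b : ℝ) - c ≤ q := by linarith
      linarith [expand ▸ habR]
    have natkey : a + m * (c + 1) + 1 ≤ q := by exact_mod_cast keyR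
    have hq2' : 2 ≤ q := hq.two_le
    have hih : m ≤ ((Finset.Ioc a (q - 1)).filter Nat.Prime).card := by
      apply ih a (q - 1) c hx0
      · refine le_trans (Real.rpow_le_rpow (by positivity) ?_ (by norm_num)) hc
        exact_mod_cast Nat.le_trans (Nat.sub_le _ _) hqb
      · omega
    have hsub : (Finset.Ioc a (q - 1)).filter Nat.Prime ⊆
        (Finset.Ioc a b).filter Nat.Prime := by
      apply Finset.filter_subset_filter
      apply Finset.Ioc_subset_Ioc_right
      omega
    have hmem : q ∈ (Finset.Ioc a b).filter Nat.Prime := by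
      simp only [Finset.mem_filter, Finset.mem_Ioc]
      exact ⟨⟨by omega, hqb⟩, hq⟩
    have hnmem : q ∉ (Finset.Ioc a (q - 1)).filter Nat.Prime := by
      simp only [Finset.mem_filter, Finset.mem_Ioc]
      omega
    have hlt : ((Finset.Ioc a (q - 1)).filter Nat.Prime).card <
        ((Finset.Ioc a b).filter Nat.Prime).card := by
      apply Finset.card_lt_card
      exact (Finset.ssubset_iff_of_subset hsub).2 ⟨q, hmem, hnmem⟩
    omega

/-- Strong Brocard's theorem (exponent 3): assuming BHP, for every positive
integer `k` there is a constant `N` such that for all consecutive primes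
`p' < p` with `p' > N`, the interval `(p'³, p³)` contains at least `2k`
primes. -/
theorem strong_brocard_exponent_three (hBHP : BHP) :
    ∀ k : ℕ, 0 < k → ∃ N : ℕ, ∀ p' p : ℕ, p'.Prime → p.Prime → p' < p →
      (∀ r : ℕ, r.Prime → ¬(p' < r ∧ r < p)) → N < p' →
      2 * k ≤ ((Finset.range (p ^ 3)).filter
                (fun q => q.Prime ∧ p' ^ 3 < q ∧ q < p ^ 3)).card := by
  obtain ⟨x₀, hx₀⟩ := hBHP
  intro k hk
  refine ⟨max ⌈x₀⌉₊ (256 * k ^ 4 + 4 * k + 1), ?_⟩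
  intro p' p hp' hp hlt _ hN
  have hk1 : 1 ≤ k := hk
  have hNx : ⌈x₀⌉₊ < p' := lt_of_le_of_lt (le_max_left _ _) hN
  have hNk : 256 * k ^ 4 + 4 * k + 1 < p' := lt_of_le_of_lt (le_max_right _ _) hN
  have hpbig : 256 * k ^ 4 + 4 * k + 3 ≤ p := by omega
  have hp2 : 2 ≤ p' := hp'.two_le
  -- real facts about p
  have hpR : (0 : ℝ) < p := by exact_mod_cast hp.pos
  have hp1R : (1 : ℝ) ≤ p := by exact_mod_cast hp.one_lt.le
  -- bound p ^ (63/40) against p ^ 2 / (4k)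
  have h4k : (4 * k : ℝ) ≤ (p : ℝ) ^ ((1 : ℝ) / 4) := by
    have h44 : (4 * k) ^ 4 = 256 * k ^ 4 := by ring
    have h1 : ((4 * k : ℕ) : ℝ) ^ (4 : ℕ) ≤ (p : ℝ) := by
      exact_mod_cast (by omega : (4 * k) ^ 4 ≤ p)
    have h2 : (((4 * k : ℕ) : ℝ) ^ (4 : ℕ)) ^ ((1 : ℝ) / 4) ≤ (p : ℝ) ^ ((1 : ℝ) / 4) :=
      Real.rpow_le_rpow (by positivity) h1 (by norm_num)
    calc (4 * k : ℝ) = (((4 * k : ℕ) : ℝ) ^ (4 : ℕ)) ^ ((1 : ℝ) / 4) := by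
          rw [← Real.rpow_natCast ((4 * k : ℕ) : ℝ) 4, ← Real.rpow_mul (by positivity)]
          norm_num
      _ ≤ _ := h2
  have h17 : (4 * k : ℝ) ≤ (p : ℝ) ^ ((17 : ℝ) / 40) :=
    le_trans h4k (Real.rpow_le_rpow_of_exponent_le hp1R (by norm_num))
  have hsplit : (p : ℝ) ^ ((17 : ℝ) / 40) * (p : ℝ) ^ ((63 : ℝ) / 40) = (p : ℝ) ^ 2 := by
    rw [← Real.rpow_add hpR, ← Real.rpow_natCast (p : ℝ) 2]
    norm_num
  have h63pos : (0 : ℝ) ≤ (p : ℝ) ^ ((63 : ℝ) / 40) := by positivity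
  have hmul : (4 * k : ℝ) * (p : ℝ) ^ ((63 : ℝ) / 40) ≤ (p : ℝ) ^ 2 := by
    calc (4 * k : ℝ) * (p : ℝ) ^ ((63 : ℝ) / 40)
        ≤ (p : ℝ) ^ ((17 : ℝ) / 40) * (p : ℝ) ^ ((63 : ℝ) / 40) :=
          mul_le_mul_of_nonneg_right h17 h63pos
      _ = (p : ℝ) ^ 2 := hsplit
  -- define c and its bound
  set c : ℕ := ⌈((p ^ 3 - 1 : ℕ) : ℝ) ^ ((21 : ℝ) / 40)⌉₊ with hc_def
  have hp3 : 1 ≤ p ^ 3 := Nat.one_le_pow _ _ hp.pos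
  have hcastp3 : ((p ^ 3 - 1 : ℕ) : ℝ) = (p : ℝ) ^ 3 - 1 := by
    push_cast [hp3]; ring
  have hcub : ((p : ℝ) ^ 3) ^ ((21 : ℝ) / 40) = (p : ℝ) ^ ((63 : ℝ) / 40) := by
    rw [← Real.rpow_natCast (p : ℝ) 3, ← Real.rpow_mul hpR.le]
    norm_num
  have hcbound : (c : ℝ) ≤ (p : ℝ) ^ ((63 : ℝ) / 40) + 1 := by
    have h1 : ((p ^ 3 - 1 : ℕ) : ℝ) ^ ((21 : ℝ) / 40) ≤ (p : ℝ) ^ ((63 : ℝ) / 40) := by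
      rw [← hcub]
      refine Real.rpow_le_rpow (by positivity) ?_ (by norm_num)
      rw [hcastp3]; nlinarith
    have h2 : (c : ℝ) < ((p ^ 3 - 1 : ℕ) : ℝ) ^ ((21 : ℝ) / 40) + 1 :=
      Nat.ceil_lt_add_one (by positivity)
    linarith
  -- the main length inequality, over ℝ
  have hlen : (p' : ℝ) ^ 3 + 2 * k * ((c : ℝ) + 1) ≤ (p : ℝ) ^ 3 - 1 := by
    have hp'le : (p' : ℝ) ≤ (p : ℝ) - 1 := by
      have : p' + 1 ≤ p := hlt
      have := (Nat.cast_le (α := ℝ)).2 this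
      push_cast at this; linarith
    have hp'pos : (0 : ℝ) ≤ p' := by positivity
    have hcube : (p' : ℝ) ^ 3 ≤ ((p : ℝ) - 1) ^ 3 := by
      apply pow_le_pow_left₀ hp'pos hp'le
    have hk4 : 1 ≤ k ^ 4 := Nat.one_le_pow _ _ hk
    have hpge : (4 * k + 4 : ℝ) ≤ (p : ℝ) := by
      have : 4 * k + 4 ≤ p := by omega
      exact_mod_cast this
    have hp3R : (3 : ℝ) ≤ p := by
      have : (3 : ℕ) ≤ p := by omega
      exact_mod_cast this
    have hsq : (p : ℝ) ≤ (p : ℝ) ^ 2 := by nlinarith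
    have h2k : (2 * k : ℝ) * ((c : ℝ) + 1) ≤ 2 * k * ((p : ℝ) ^ ((63 : ℝ) / 40) + 2) := by
      have hkpos : (0 : ℝ) ≤ 2 * k := by positivity
      apply mul_le_mul_of_nonneg_left _ hkpos
      linarith
    have hbound2 : (2 * k : ℝ) * ((p : ℝ) ^ ((63 : ℝ) / 40) + 2) ≤ (p : ℝ) ^ 2 + 4 * k := by
      nlinarith
    have hexp : ((p : ℝ) - 1) ^ 3 = (p : ℝ) ^ 3 - 3 * (p : ℝ) ^ 2 + 3 * p - 1 := by ring
    have hkp : (4 * k : ℝ) + 3 * p + 1 ≤ 2 * (p : ℝ) ^ 2 := by nlinarith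
    nlinarith
  -- convert to ℕ
  have hlenN : p' ^ 3 + 2 * k * (c + 1) ≤ p ^ 3 - 1 := by
    have : ((p' ^ 3 + 2 * k * (c + 1) : ℕ) : ℝ) ≤ ((p ^ 3 - 1 : ℕ) : ℝ) := by
      rw [hcastp3]; push_cast; linarith
    exact_mod_cast this
  have hx0le : x₀ ≤ ((p' ^ 3 : ℕ) : ℝ) := by
    have h1 : x₀ ≤ (⌈x₀⌉₊ : ℝ) := Nat.le_ceil x₀
    have h2 : (⌈x₀⌉₊ : ℝ) ≤ ((p' ^ 3 : ℕ) : ℝ) := by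
      have hps : p' ≤ p' ^ 3 := Nat.le_self_pow (by norm_num) _
      have : ⌈x₀⌉₊ ≤ p' ^ 3 := by omega
      exact_mod_cast this
    linarith
  have hceil : ((p ^ 3 - 1 : ℕ) : ℝ) ^ ((21 : ℝ) / 40) ≤ (c : ℝ) := by
    rw [hc_def]; exact Nat.le_ceil _
  have hmain := bhp_many_primes x₀ hx₀ (2 * k) (p' ^ 3) (p ^ 3 - 1) c hx0le hceil hlenN
  refine le_trans hmain (Finset.card_le_card ?_)
  intro q hq
  simp only [Finset.mem_filter, Finset.mem_Ioc, Finset.mem_range] at hq ⊢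
  obtain ⟨⟨hq1, hq2⟩, hq3⟩ := hq
  exact ⟨by omega, hq3, hq1, by omega⟩
end

section
/- Assume the Baker–Harman–Pintz hypothesis. Then there exists a constant N such that for all consecutive primes p' < p with p' > N and p - p' > 3·p'^(1/20) (real power), the open interval (p'², p²) contains at least two primes. -/
set_option maxHeartbeats 1000000

/-- Weak Brocard's theorem (exponent 2): assuming BHP, there is a constant
`N` such that for all consecutive primes `p' < p` with `p' > N` and
`p - p' > 3·p'^(1/20)`, the interval `(p'², p²)` contains at least two
primes. -/
theorem weak_brocard_exponent_two (hBHP : BHP) :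
    ∃ N : ℕ, ∀ p' p : ℕ, p'.Prime → p.Prime → p' < p →
      (∀ r : ℕ, r.Prime → ¬(p' < r ∧ r < p)) → N < p' →
      3 * (p' : ℝ) ^ ((1 : ℝ) / 20) < (p : ℝ) - (p' : ℝ) →
      ∃ q r : ℕ, q.Prime ∧ r.Prime ∧ q ≠ r ∧
        p' ^ 2 < q ∧ q < p ^ 2 ∧ p' ^ 2 < r ∧ r < p ^ 2 := by
  obtain ⟨x₀, hx₀⟩ := hBHP
  refine ⟨⌈max x₀ 3⌉₊, ?_⟩
  intro p' p hp' hp hlt hcons hN hgap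
  -- Bertrand: p ≤ 2 p'
  obtain ⟨s, hs, hs1, hs2⟩ := Nat.exists_prime_lt_and_le_two_mul p' hp'.ne_zero
  have hple : p ≤ 2 * p' := by
    rcases le_or_gt p s with h | h
    · exact h.trans hs2
    · exact absurd ⟨hs1, h⟩ (hcons s hs)
  set a : ℝ := (p' : ℝ) with ha
  set b : ℝ := (p : ℝ) with hb
  have hceil : (⌈max x₀ 3⌉₊ : ℝ) + 1 ≤ a := by
    have h : (⌈max x₀ 3⌉₊ + 1 : ℕ) ≤ p' := hN
    rw [ha]; exact_mod_cast h
  have hmax : max x₀ 3 ≤ (⌈max x₀ 3⌉₊ : ℝ) := Nat.le_ceil _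
  have hx₀a : x₀ + 1 ≤ a := by
    have := le_max_left x₀ 3
    linarith
  have ha4 : 4 ≤ a := by
    have := le_max_right x₀ 3
    linarith
  have hab : a < b := by rw [ha, hb]; exact_mod_cast hlt
  have hb2a : b ≤ 2 * a := by rw [ha, hb]; exact_mod_cast hple
  set u : ℝ := a ^ ((1:ℝ)/20) with hu
  set v : ℝ := b ^ ((1:ℝ)/20) with hv
  have ha0 : (0:ℝ) < a := by linarith
  have hb0 : (0:ℝ) < b := by linarith
  have hu1 : 1 ≤ u := Real.one_le_rpow (by linarith) (by norm_num)
  have h2r : (2:ℝ) ^ ((1:ℝ)/20) ≤ 1.1 := by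
    have h1 : (2:ℝ) ≤ (1.1:ℝ) ^ (20:ℕ) := by norm_num
    have h2 : ((1.1:ℝ) ^ (20:ℕ)) ^ ((1:ℝ)/20) = 1.1 := by
      rw [← Real.rpow_natCast (1.1:ℝ) 20, ← Real.rpow_mul (by norm_num)]
      norm_num
    calc (2:ℝ) ^ ((1:ℝ)/20) ≤ ((1.1:ℝ) ^ (20:ℕ)) ^ ((1:ℝ)/20) :=
          Real.rpow_le_rpow (by norm_num) h1 (by norm_num)
      _ = 1.1 := h2
  have hvu : v ≤ 1.1 * u := by
    have h1 : v ≤ (2*a) ^ ((1:ℝ)/20) := Real.rpow_le_rpow hb0.le hb2a (by norm_num)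
    have h2 : ((2*a):ℝ) ^ ((1:ℝ)/20) = 2 ^ ((1:ℝ)/20) * u :=
      Real.mul_rpow (by norm_num) ha0.le
    nlinarith [Real.rpow_nonneg ha0.le ((1:ℝ)/20)]
  have hv0 : 0 ≤ v := Real.rpow_nonneg hb0.le _
  have haa : a ≤ a^2 := by nlinarith
  have ha16 : 16 ≤ a^2 := by nlinarith
  -- key bound: x^(21/40) ≤ 2.2·a·u whenever 0 ≤ x ≤ b²
  have key : ∀ x : ℝ, 0 ≤ x → x ≤ b^2 → x ^ ((21:ℝ)/40) ≤ 2.2 * (a*u) := by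
    intro x hx0 hxb
    have h1 : x ^ ((21:ℝ)/40) ≤ (b^2) ^ ((21:ℝ)/40) :=
      Real.rpow_le_rpow hx0 hxb (by norm_num)
    have h2 : ((b^2:ℝ)) ^ ((21:ℝ)/40) = b ^ ((21:ℝ)/20) := by
      rw [← Real.rpow_natCast b 2, ← Real.rpow_mul hb0.le]
      norm_num
    have h3 : b ^ ((21:ℝ)/20) = b * v := by
      rw [show (21:ℝ)/20 = 1 + 1/20 by norm_num, Real.rpow_add hb0, Real.rpow_one]
    have h4 : b * v ≤ 2 * a * (1.1 * u) := by nlinarith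
    nlinarith
  have hgap2 : a^2 + 6*(a*u) ≤ b^2 := by
    have h1 : 3 * u * (2*a) ≤ (b - a) * (b + a) :=
      mul_le_mul hgap.le (by linarith) (by linarith) (by nlinarith)
    have h2 : (b - a) * (b + a) = b^2 - a^2 := by ring
    linarith
  have hau : 4 ≤ a * u := by nlinarith
  -- first prime q near b² - 1
  obtain ⟨q, hq, hq1, hq2⟩ := hx₀ (b^2 - 1) (by linarith)
  have hkey1 := key (b^2 - 1) (by linarith) (by linarith)
  have hql : a^2 + 3.8*(a*u) - 1 ≤ (q:ℝ) := by linarith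
  have hqb : (q:ℝ) < b^2 := by linarith
  -- second prime r near q - 1
  obtain ⟨r, hr, hr1, hr2⟩ := hx₀ ((q:ℝ) - 1) (by linarith)
  have hkey2 := key ((q:ℝ) - 1) (by linarith) (by linarith)
  have hrl : a^2 < (r:ℝ) := by linarith
  have hrq : (r:ℝ) < (q:ℝ) := by linarith
  have hrqn : r < q := by exact_mod_cast hrq
  refine ⟨q, r, hq, hr, hrqn.ne', ?_, ?_, ?_, ?_⟩
  · have h : (p':ℝ)^2 < (q:ℝ) := by rw [← ha]; linarith
    exact_mod_cast h
  · have h : (q:ℝ) < (p:ℝ)^2 := by rw [← hb]; linarith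
    exact_mod_cast h
  · have h : (p':ℝ)^2 < (r:ℝ) := by rw [← ha]; linarith
    exact_mod_cast h
  · have h : (r:ℝ) < (p:ℝ)^2 := by rw [← hb]; linarith
    exact_mod_cast h
end

section
/- Suppose that for every pair of consecutive primes p' < p in which p is a Legendre prime, the gap satisfies p - p' < 2·√p + 1 (as real numbers). Then for every integer n ≥ 2 there is a prime p with (n-1)² < p < n², i.e., Legendre's conjecture holds. -/
/-- A prime `p` is a Legendre prime if it is the first prime after some
perfect square `a²` with `a > 0`. -/
def LegendrePrime (p : ℕ) : Prop :=
  p.Prime ∧ ∃ a : ℕ, 0 < a ∧ a ^ 2 < p ∧ ∀ q : ℕ, q.Prime → ¬(a ^ 2 < q ∧ q < p)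

/-- If every pair of consecutive primes `p' < p` in which `p` is a Legendre
prime satisfies `p - p' < 2·√p + 1`, then Legendre's conjecture holds. -/
theorem legendre_of_gap_bound
    (h : ∀ p' p : ℕ, p'.Prime → p.Prime → p' < p →
      (∀ r : ℕ, r.Prime → ¬(p' < r ∧ r < p)) → LegendrePrime p →
      (p : ℝ) - (p' : ℝ) < 2 * Real.sqrt p + 1) :
    ∀ n : ℕ, 2 ≤ n → ∃ p : ℕ, p.Prime ∧ (n - 1) ^ 2 < p ∧ p < n ^ 2 := by
  intro n hn
  by_contra hcon
  push_neg at hcon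
  rcases Nat.lt_or_ge n 4 with h4 | h4
  · interval_cases n
    · exact absurd (hcon 3 (by norm_num) (by norm_num)) (by norm_num)
    · exact absurd (hcon 5 (by norm_num) (by norm_num)) (by norm_num)
  · obtain ⟨k, rfl⟩ : ∃ k, n = k + 4 := ⟨n - 4, by omega⟩
    have hm1 : k + 4 - 1 = k + 3 := rfl
    rw [hm1] at hcon
    -- the least prime above (k+3)^2
    have hex : ∃ p, p.Prime ∧ (k + 3) ^ 2 < p := by
      obtain ⟨p, hle, hp⟩ := Nat.exists_infinite_primes ((k + 3) ^ 2 + 1)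
      exact ⟨p, hp, by omega⟩
    set p := Nat.find hex with hpdef
    obtain ⟨hpp, hplt⟩ := Nat.find_spec hex
    have hnotbetween : ∀ q : ℕ, q.Prime → ¬((k + 3) ^ 2 < q ∧ q < p) := by
      rintro q hq ⟨h1, h2⟩
      exact absurd (Nat.find_min' hex ⟨hq, h1⟩) (Nat.not_le.mpr h2)
    -- p is above (k+4)^2
    have hn2 : ¬ Nat.Prime ((k + 4) ^ 2) := by
      have : (k + 4) ^ 2 = (k + 4) * (k + 4) := by ring
      rw [this]
      exact Nat.not_prime_mul (by omega) (by omega)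
    have hpn : (k + 4) ^ 2 < p := by
      have hge := hcon p hpp hplt
      rcases Nat.lt_or_ge ((k + 4) ^ 2) p with h' | h'
      · exact h'
      · have : p = (k + 4) ^ 2 := le_antisymm h' hge
        exact absurd (this ▸ hpp) hn2
    have hsqrel : (k + 4) ^ 2 = (k + 3) ^ 2 + 2 * k + 7 := by ring
    have h9 : 9 ≤ (k + 3) ^ 2 := by nlinarith
    have hp2 : 2 ≤ p - 1 := by omega
    -- the previous prime
    set p' := Nat.findGreatest Nat.Prime (p - 1) with hp'def
    have hp'prime : p'.Prime := Nat.findGreatest_spec hp2 Nat.prime_two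
    have hp'le : p' ≤ p - 1 := Nat.findGreatest_le _
    have hp'lt : p' < p := by omega
    have hcons : ∀ r : ℕ, r.Prime → ¬(p' < r ∧ r < p) := by
      rintro r hr ⟨h1, h2⟩
      exact absurd (Nat.le_findGreatest (by omega) hr) (Nat.not_le.mpr h1)
    have hLeg : LegendrePrime p := ⟨hpp, k + 3, by omega, hplt, hnotbetween⟩
    have hgap := h p' p hp'prime hpp hp'lt hcons hLeg
    -- p' < (k+3)^2 - 1
    have hp'sq : p' < (k + 3) ^ 2 := by
      by_contra hge
      push_neg at hge
      rcases Nat.lt_or_ge ((k + 3) ^ 2) p' with h' | h'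
      · exact hnotbetween p' hp'prime ⟨h', hp'lt⟩
      · have heq : p' = (k + 3) ^ 2 := le_antisymm h' hge
        have : (k + 3) ^ 2 = (k + 3) * (k + 3) := by ring
        rw [heq, this] at hp'prime
        exact Nat.not_prime_mul (by omega) (by omega) hp'prime
    have hp'ne : p' ≠ (k + 3) ^ 2 - 1 := by
      intro heq
      have hfac : (k + 3) ^ 2 = (k + 2) * (k + 4) + 1 := by ring
      have : p' = (k + 2) * (k + 4) := by omega
      rw [this] at hp'prime
      exact Nat.not_prime_mul (by omega) (by omega) hp'prime
    have hp'le2 : p' + 2 ≤ (k + 3) ^ 2 := by omega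
    -- gap arithmetic
    obtain ⟨g, hg⟩ : ∃ g, p = p' + 1 + g := ⟨p - p' - 1, by omega⟩
    have hsq : g ^ 2 < 4 * p := by
      have hx : (g : ℝ) < 2 * Real.sqrt p := by
        have hcast : (p : ℝ) - (p' : ℝ) = (g : ℝ) + 1 := by
          rw [hg]; push_cast; ring
        rw [hcast] at hgap
        linarith
      have hs : Real.sqrt p ^ 2 = p := Real.sq_sqrt (by positivity)
      have hR : (g : ℝ) ^ 2 < 4 * p := by
        nlinarith [Real.sqrt_nonneg (p : ℝ), hx, hs, Nat.cast_nonneg (α := ℝ) g]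
      exact_mod_cast hR
    have hgl : 2 * k + 9 ≤ g := by omega
    have e1 : (2 * k + 9) * g ≤ g * g := Nat.mul_le_mul_right g hgl
    have e2 : (2 * k + 5) * (2 * k + 9) ≤ (2 * k + 5) * g := Nat.mul_le_mul_left _ hgl
    have epow : g ^ 2 = g * g := pow_two g
    have hS : (k + 3) ^ 2 = k * k + 6 * k + 9 := by ring
    have eA : (2 * k + 9) * g = (2 * k + 5) * g + 4 * g := by ring
    have eB : (2 * k + 5) * (2 * k + 9) = 4 * (k * k) + 28 * k + 45 := by ring
    omega
end

section
/- Suppose Andrica's inequality √p - √p' < 1 holds for every pair of consecutive primes p' < p in which p is a Legendre prime. Then for every integer n ≥ 2 there is a prime p with (n-1)² < p < n², i.e., Legendre's conjecture holds. -/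
/-- If Andrica's inequality `√p - √p' < 1` holds for every pair of
consecutive primes `p' < p` in which `p` is a Legendre prime, then
Legendre's conjecture holds. -/
theorem legendre_of_andrica
    (h : ∀ p' p : ℕ, p'.Prime → p.Prime → p' < p →
      (∀ r : ℕ, r.Prime → ¬(p' < r ∧ r < p)) → LegendrePrime p →
      Real.sqrt p - Real.sqrt p' < 1) :
    ∀ n : ℕ, 2 ≤ n → ∃ p : ℕ, p.Prime ∧ (n - 1) ^ 2 < p ∧ p < n ^ 2 := by
  intro n hn
  rcases eq_or_lt_of_le hn with h2 | h3
  · refine ⟨3, by norm_num, ?_, ?_⟩ <;> subst h2 <;> norm_num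
  set a := n - 1 with ha_def
  have ha : 2 ≤ a := by omega
  have han : a + 1 = n := by omega
  -- smallest prime above a^2
  obtain ⟨q0, hq0le, hq0p⟩ := Nat.exists_infinite_primes (a ^ 2 + 1)
  have hex : ∃ q : ℕ, a ^ 2 < q ∧ q.Prime := ⟨q0, by omega, hq0p⟩
  classical
  set p := Nat.find hex with hp_def
  obtain ⟨hpa, hpprime⟩ := Nat.find_spec hex
  have hpmin : ∀ m, m < p → ¬(a ^ 2 < m ∧ m.Prime) := fun m hm => Nat.find_min hex hm
  -- largest prime ≤ a^2
  set p' := Nat.findGreatest Nat.Prime (a ^ 2) with hp'_def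
  have h2a : 2 ≤ a ^ 2 := by nlinarith
  have hp'prime : Nat.Prime p' := Nat.findGreatest_spec h2a Nat.prime_two
  have hp'le : p' ≤ a ^ 2 := Nat.findGreatest_le _
  have hp'p : p' < p := lt_of_le_of_lt hp'le hpa
  have hnone : ∀ r : ℕ, r.Prime → ¬(p' < r ∧ r < p) := by
    intro r hr ⟨h1, h2⟩
    rcases le_or_gt r (a ^ 2) with hle | hgt
    · exact absurd (Nat.le_findGreatest hle hr) (by omega)
    · exact hpmin r h2 ⟨hgt, hr⟩
  have hleg : LegendrePrime p :=
    ⟨hpprime, a, by omega, hpa, fun q hq ⟨h1, h2⟩ => hpmin q h2 ⟨h1, hq⟩⟩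
  have hand := h p' p hp'prime hpprime hp'p hnone hleg
  -- deduce p < (a+1)^2
  have hsq : Real.sqrt p' ≤ (a : ℝ) := by
    calc Real.sqrt p' ≤ Real.sqrt ((a : ℝ) ^ 2) := by
          apply Real.sqrt_le_sqrt; exact_mod_cast hp'le
      _ = (a : ℝ) := by
          rw [Real.sqrt_sq (by positivity)]
  have hlt : Real.sqrt p < (a : ℝ) + 1 := by linarith
  have hppos : (0 : ℝ) < (a : ℝ) + 1 := by positivity
  have hpow : (p : ℝ) < ((a : ℝ) + 1) ^ 2 := by
    have h1 : Real.sqrt p ^ 2 < ((a : ℝ) + 1) ^ 2 :=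
      pow_lt_pow_left₀ hlt (Real.sqrt_nonneg _) two_ne_zero
    rwa [Real.sq_sqrt (by positivity)] at h1
  have hfin : p < (a + 1) ^ 2 := by
    have : (p : ℝ) < ((a + 1 : ℕ) : ℝ) ^ 2 := by push_cast; linarith
    exact_mod_cast this
  exact ⟨p, hpprime, hpa, han ▸ hfin⟩
end

section
/- Assume the modified Andrica conjecture. Then there exists a constant N such that for every integer n > N there exist primes p and q with n² < p < n² + n and n² + n < q < (n+1)². -/
/-- The modified Andrica conjecture: `√p_{n+1} - √p_n → 0` where `p_n` is the
`n`-th prime. -/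
def ModifiedAndrica : Prop :=
  Filter.Tendsto
    (fun n : ℕ => Real.sqrt (Nat.nth Nat.Prime (n + 1)) - Real.sqrt (Nat.nth Nat.Prime n))
    Filter.atTop (nhds 0)

/-- Helper: given an index `K` past which consecutive prime square roots differ by
less than `1/3`, every `m ≥ p_K` has a prime just above it. -/
lemma next_prime_close (K : ℕ)
    (hK : ∀ k, K ≤ k →
      Real.sqrt (Nat.nth Nat.Prime (k + 1)) - Real.sqrt (Nat.nth Nat.Prime k) < 1/3)
    (m : ℕ) (hm : Nat.nth Nat.Prime K ≤ m) :
    ∃ r : ℕ, r.Prime ∧ m < r ∧ (Real.sqrt r < Real.sqrt m + 1/3) := by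
  have hinf : {p : ℕ | p.Prime}.Infinite := Nat.infinite_setOf_prime
  set c := Nat.count Nat.Prime (m + 1) with hc
  have hKc : K < c := (Nat.lt_nth_iff_count_lt hinf).mpr (Nat.lt_succ_of_le hm)
  obtain ⟨k, hk⟩ : ∃ k, c = k + 1 := ⟨c - 1, (Nat.succ_pred_eq_of_pos (by omega)).symm⟩
  have hKk : K ≤ k := by omega
  have h1 : Nat.nth Nat.Prime k ≤ m := by
    have : Nat.nth Nat.Prime k < m + 1 := Nat.nth_lt_of_lt_count (by omega)
    omega
  have h2 : m < Nat.nth Nat.Prime (k + 1) := by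
    have h3 : m + 1 ≤ Nat.nth Nat.Prime (Nat.count Nat.Prime (m + 1)) :=
      Nat.le_nth_count hinf (m + 1)
    rw [← hc, hk] at h3
    omega
  refine ⟨Nat.nth Nat.Prime (k + 1), Nat.prime_nth_prime _, h2, ?_⟩
  have hlt := hK k hKk
  have hmono : Real.sqrt (Nat.nth Nat.Prime k) ≤ Real.sqrt m :=
    Real.sqrt_le_sqrt (by exact_mod_cast h1)
  linarith

/-- Conditional Oppermann: assuming the modified Andrica conjecture, there is
a constant `N` such that for every `n > N` there are primes `p, q` with
`n² < p < n² + n` and `n² + n < q < (n+1)²`. -/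
theorem oppermann_of_modified_andrica (hMA : ModifiedAndrica) :
    ∃ N : ℕ, ∀ n : ℕ, N < n →
      ∃ p q : ℕ, p.Prime ∧ q.Prime ∧
        n ^ 2 < p ∧ p < n ^ 2 + n ∧ n ^ 2 + n < q ∧ q < (n + 1) ^ 2 := by
  obtain ⟨K, hK⟩ := (Metric.tendsto_atTop.mp hMA (1/3) (by norm_num))
  have hK' : ∀ k, K ≤ k →
      Real.sqrt (Nat.nth Nat.Prime (k + 1)) - Real.sqrt (Nat.nth Nat.Prime k) < 1/3 := by
    intro k hk
    have := hK k hk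
    rw [Real.dist_0_eq_abs] at this
    exact (le_abs_self _).trans_lt this
  refine ⟨Nat.nth Nat.Prime K + 1, fun n hn => ?_⟩
  have hnth2 : 2 ≤ Nat.nth Nat.Prime K := (Nat.prime_nth_prime K).two_le
  have hn2 : 2 ≤ n := by omega
  have hnK : Nat.nth Nat.Prime K ≤ n ^ 2 := by nlinarith
  -- first prime
  obtain ⟨p, hp, hp1, hp2⟩ := next_prime_close K hK' (n ^ 2) hnK
  obtain ⟨q, hq, hq1, hq2⟩ := next_prime_close K hK' (n ^ 2 + n) (by omega)
  refine ⟨p, q, hp, hq, hp1, ?_, hq1, ?_⟩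
  · have hs : Real.sqrt ((n : ℕ) ^ 2 : ℕ) = (n : ℝ) := by
      push_cast
      exact Real.sqrt_sq (by positivity)
    rw [hs] at hp2
    have hp2' : ((p : ℝ)) < ((n : ℝ) + 1/3) ^ 2 := (Real.sqrt_lt' (by positivity)).mp hp2
    have h2' : (2:ℝ) ≤ (n:ℝ) := by exact_mod_cast hn2
    have hps : ((p : ℝ)) < ((n : ℝ) ^ 2 + n) := by
      ring_nf at hp2'
      nlinarith [hp2', h2']
    exact_mod_cast hps
  · have hs : Real.sqrt ((n ^ 2 + n : ℕ) : ℝ) ≤ (n : ℝ) + 1/2 := by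
      rw [show ((n ^ 2 + n : ℕ) : ℝ) = (n : ℝ) ^ 2 + n by push_cast; ring]
      rw [show (n : ℝ) + 1/2 = Real.sqrt (((n : ℝ) + 1/2) ^ 2) by
        rw [Real.sqrt_sq (by positivity)]]
      exact Real.sqrt_le_sqrt (by nlinarith)
    have hq2' : Real.sqrt q < (n : ℝ) + 1 := by linarith
    have hqs : ((q : ℝ)) < ((n : ℝ) + 1) ^ 2 := (Real.sqrt_lt' (by positivity)).mp hq2'
    exact_mod_cast hqs
end

section
/- Assume Cramer's conjecture in the weak form: there exists a constant C > 0 such that p - p' ≤ C·(ln p')² for all pairs of consecutive primes p' < p. Then for every real ε with 0 < ε ≤ 1 there exists a constant N such that for every integer n > N there is a prime p with (n-1)^(1+ε) < p < n^(1+ε), where the powers are real powers. -/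
/-!
Put `s = 1 + ε` and `m = n - 1`. The consecutive primes `p' ≤ ⌊m^s⌋ < p` straddle `m^s`, and
Cramér's bound gives `p ≤ m^s + C (log m^s)^2 = m^s + C s^2 (log m)^2`. By Bernoulli's inequality
`(m + 1)^s ≥ m^s + s m^(s-1)`, and `(log m)^2 = o(m^ε)`, so `p < (m + 1)^s = n^s` for large `n`.
-/

open Filter Real Asymptotics

theorem Nat.exists_consecutive_primes_le_lt {k : ℕ} (hk : 2 ≤ k) :
    ∃ p' p : ℕ, p'.Prime ∧ p.Prime ∧ p' ≤ k ∧ k < p ∧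
      ∀ r : ℕ, r.Prime → ¬(p' < r ∧ r < p) := by
  have hnext : ∃ p, p.Prime ∧ k < p :=
    (Nat.exists_infinite_primes (k + 1)).imp fun p hp => ⟨hp.2, hp.1⟩
  refine ⟨Nat.findGreatest Nat.Prime k, Nat.find hnext,
    Nat.findGreatest_spec hk Nat.prime_two, (Nat.find_spec hnext).1, Nat.findGreatest_le k,
    (Nat.find_spec hnext).2, ?_⟩
  rintro r hr ⟨hlow, hhigh⟩
  rcases le_or_gt r k with hrk | hrk
  · exact Nat.findGreatest_is_greatest hlow hrk hr
  · exact Nat.find_min hnext hhigh ⟨hr, hrk⟩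

theorem exists_prime_gt_le_add_of_gap_le {C : ℝ} (hC : 0 ≤ C)
    (hgap : ∀ p' p : ℕ, p'.Prime → p.Prime → p' < p →
      (∀ r : ℕ, r.Prime → ¬(p' < r ∧ r < p)) → (p : ℝ) - p' ≤ C * log p' ^ 2)
    {x : ℝ} (hx : 2 ≤ x) : ∃ p : ℕ, p.Prime ∧ x < p ∧ (p : ℝ) ≤ x + C * log x ^ 2 := by
  obtain ⟨p', p, hp', hp, hp'k, hkp, hcons⟩ :=
    Nat.exists_consecutive_primes_le_lt (Nat.le_floor (by exact_mod_cast hx) : 2 ≤ ⌊x⌋₊)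
  have hp'x : (p' : ℝ) ≤ x := (Nat.cast_le.2 hp'k).trans (Nat.floor_le (by linarith))
  have hxp : x < p := (Nat.lt_floor_add_one x).trans_le (by exact_mod_cast hkp)
  have hlog : log p' ^ 2 ≤ log x ^ 2 := by
    have hp'_pos : (0 : ℝ) < p' := by exact_mod_cast hp'.pos
    gcongr
  refine ⟨p, hp, hxp, ?_⟩
  have := hgap p' p hp' hp (by exact_mod_cast hp'x.trans_lt hxp) hcons
  nlinarith [mul_le_mul_of_nonneg_left hlog hC]

theorem rpow_add_mul_rpow_sub_one_le_add_one_rpow {m s : ℝ} (hm : 0 < m) (hs : 1 ≤ s) :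
    m ^ s + s * m ^ (s - 1) ≤ (m + 1) ^ s := by
  have hbern : 1 + s * m⁻¹ ≤ (1 + m⁻¹) ^ s :=
    one_add_mul_self_le_rpow_one_add (by linarith [inv_pos.2 hm]) hs
  calc m ^ s + s * m ^ (s - 1) = m ^ s * (1 + s * m⁻¹) := by
        rw [rpow_sub_one hm.ne']; field_simp
    _ ≤ m ^ s * (1 + m⁻¹) ^ s := by gcongr
    _ = (m + 1) ^ s := by
        rw [← mul_rpow hm.le (by positivity), mul_add, mul_inv_cancel₀ hm.ne', mul_one]

theorem eventually_mul_log_rpow_sq_lt (C : ℝ) {s : ℝ} (hs : 1 < s) :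
    ∀ᶠ m : ℝ in atTop, C * log (m ^ s) ^ 2 < s * m ^ (s - 1) := by
  have hs0 : 0 < s := by linarith
  have hlittle : (fun m : ℝ => C * s ^ 2 * log m ^ 2) =o[atTop] fun m => s * m ^ (s - 1) := by
    have := isLittleO_log_rpow_rpow_atTop 2 (sub_pos.2 hs)
    simp only [rpow_two] at this
    exact (this.const_mul_left _).const_mul_right hs0.ne'
  have hpos : ∀ᶠ m : ℝ in atTop, 0 < m := eventually_gt_atTop 0
  filter_upwards [hlittle.eventuallyLT_norm_of_eventually_pos
    (hpos.mono fun m hm => by rw [norm_eq_abs]; positivity), hpos] with m hlt hm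
  rw [norm_eq_abs, norm_of_nonneg (by positivity)] at hlt
  calc C * log (m ^ s) ^ 2 = C * s ^ 2 * log m ^ 2 := by rw [log_rpow hm]; ring
    _ < s * m ^ (s - 1) := (le_abs_self _).trans_lt hlt

theorem eventually_exists_prime_rpow_lt_lt_add_one_rpow {C : ℝ} (hC : 0 ≤ C)
    (hgap : ∀ p' p : ℕ, p'.Prime → p.Prime → p' < p →
      (∀ r : ℕ, r.Prime → ¬(p' < r ∧ r < p)) → (p : ℝ) - p' ≤ C * log p' ^ 2)
    {s : ℝ} (hs : 1 < s) :
    ∀ᶠ m : ℝ in atTop, ∃ p : ℕ, p.Prime ∧ m ^ s < p ∧ (p : ℝ) < (m + 1) ^ s := by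
  filter_upwards [eventually_mul_log_rpow_sq_lt C hs, eventually_ge_atTop 2] with m hlog hm
  obtain ⟨p, hp, hlow, hhigh⟩ := exists_prime_gt_le_add_of_gap_le hC hgap
    (hm.trans (self_le_rpow_of_one_le (by linarith) hs.le))
  refine ⟨p, hp, hlow, ?_⟩
  calc (p : ℝ) ≤ m ^ s + C * log (m ^ s) ^ 2 := hhigh
    _ < m ^ s + s * m ^ (s - 1) := by gcongr
    _ ≤ (m + 1) ^ s := rpow_add_mul_rpow_sub_one_le_add_one_rpow (by linarith) hs.le

/-- Conditional theorem: assuming the weak form of Cramer's conjecture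
(`p - p' ≤ C·(ln p')²` for consecutive primes `p' < p`), for every real
`0 < ε ≤ 1` there is a constant `N` such that every integer `n > N` admits a
prime `p` with `(n-1)^(1+ε) < p < n^(1+ε)` (real powers). -/
theorem diophantine_of_cramer
    (hCramer : ∃ C : ℝ, 0 < C ∧ ∀ p' p : ℕ, p'.Prime → p.Prime → p' < p →
      (∀ r : ℕ, r.Prime → ¬(p' < r ∧ r < p)) →
      (p : ℝ) - (p' : ℝ) ≤ C * (Real.log p') ^ 2) :
    ∀ ε : ℝ, 0 < ε → ε ≤ 1 → ∃ N : ℕ, ∀ n : ℕ, N < n →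
      ∃ p : ℕ, p.Prime ∧ ((n : ℝ) - 1) ^ (1 + ε) < (p : ℝ) ∧
        (p : ℝ) < (n : ℝ) ^ (1 + ε) := by
  obtain ⟨C, hC, hgap⟩ := hCramer
  intro ε hε _
  have hshift : Tendsto (fun n : ℕ => (n : ℝ) - 1) atTop atTop :=
    tendsto_atTop_add_const_right _ _ tendsto_natCast_atTop_atTop
  obtain ⟨N, hN⟩ := eventually_atTop.mp <| hshift.eventually <|
    eventually_exists_prime_rpow_lt_lt_add_one_rpow hC.le hgap (by linarith : 1 < 1 + ε)
  refine ⟨N, fun n hn => ?_⟩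
  simpa only [sub_add_cancel] using hN n hn.le
end
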